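/- arXiv:1805.06535 — 6 statements merged into one kernel-verified Lean document; each statement's English description precedes it below -/
import Mathlib

section
/- Let c > 0 be a constant such that c·∫₀^∞|u|² ≤ ∫₀^∞|u'|² + ∫₀^∞ x^β|u|² for every continuously differentiable u : [0,∞) → ℂ with u, u' square-integrable. Then there exists C > 0 such that for every η ∈ ℂ with |η| ≤ c/2 and every twice continuously differentiable F : [0,∞) → ℂ with F, F', F'' square-integrable on (0,∞), F'(0) = 1, and −F''(x) + i x^β F(x) − η F(x) = 0 for all x ≥ 0, one has 1/C ≤ |F(0)| ≤ C. -/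
/-!
Write `P = ∫ |F'|²`, `Q = ∫ x^β |F|²` and `R = ∫ |F|²` over `(0, ∞)`. Multiplying the equation
by `conj F` and integrating by parts gives `conj F(0) = -(P + iQ - ηR)`, so the spectral
inequality `cR ≤ P + Q` and `|η| ≤ c/2` yield `P + Q ≤ 5 |F(0)|`. Integrating `(|F|²)'` gives the
trace inequality `|F(t)|² ≤ R + P` for all `t ≥ 0`. Hence `|F(0)|² ≤ R + P ≤ 5 (1 + 1/c) |F(0)|`,
which is the upper bound; and `R + P` cannot be small, since otherwise `F` would be uniformly
small, so would `F'' = (i x^β - η) F` on `[0, 1]`, and `F'` would stay close to `F'(0) = 1` there,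
making `P ≥ 1/4`.
-/

open MeasureTheory Set Filter Topology Complex ComplexConjugate

section HalfLine

variable {E : Type*} [NormedAddCommGroup E]

theorem memLp_two_restrict_Ioi_of_continuousOn {u : ℝ → E} {a : ℝ} (hu : ContinuousOn u (Ici a))
    (hu2 : IntegrableOn (fun x => ‖u x‖ ^ 2) (Ioi a)) : MemLp u 2 (volume.restrict (Ioi a)) :=
  (memLp_two_iff_integrable_sq_norm
    ((hu.mono Ioi_subset_Ici_self).aestronglyMeasurable measurableSet_Ioi)).2 hu2

theorem integral_Ioi_eq_neg_of_hasDerivWithinAt [NormedSpace ℝ E] [CompleteSpace E]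
    {g g' : ℝ → E} {a : ℝ} (hg : ∀ x ∈ Ici a, HasDerivWithinAt g (g' x) (Ici a) x)
    (hgi : IntegrableOn g (Ioi a)) (hg'i : IntegrableOn g' (Ioi a)) :
    ∫ x in Ioi a, g' x = -g a := by
  have hderiv : ∀ x ∈ Ioi a, HasDerivAt g (g' x) x :=
    fun x hx => (hg x (mem_Ici_of_Ioi hx)).hasDerivAt (Ici_mem_nhds hx)
  simpa using integral_Ioi_of_hasDerivAt_of_tendsto (hg a self_mem_Ici).continuousWithinAt
    hderiv hg'i (tendsto_zero_of_hasDerivAt_of_integrableOn_Ioi hderiv hg'i hgi)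

end HalfLine

theorem mul_sub_le_setIntegral_Ioi {f : ℝ → ℝ} {a b k : ℝ} (hab : a ≤ b)
    (hf : IntegrableOn f (Ioi a)) (hf0 : ∀ x ∈ Ioi a, 0 ≤ f x) (hk : ∀ x ∈ Ioc a b, k ≤ f x) :
    k * (b - a) ≤ ∫ x in Ioi a, f x :=
  calc k * (b - a) = ∫ _ in Ioc a b, k := by
        rw [setIntegral_const, Real.volume_real_Ioc_of_le hab, smul_eq_mul, mul_comm]
    _ ≤ ∫ x in Ioc a b, f x :=
        setIntegral_mono_on (integrableOn_const measure_Ioc_lt_top.ne)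
          (hf.mono_set Ioc_subset_Ioi_self) measurableSet_Ioc hk
    _ ≤ ∫ x in Ioi a, f x :=
        setIntegral_mono_set hf ((ae_restrict_iff' measurableSet_Ioi).2 (ae_of_all _ hf0))
          Ioc_subset_Ioi_self.eventuallyLE

theorem mul_integral_le_add_of_lintegral {α : Type*} [MeasurableSpace α] {μ : Measure α}
    {f g h : α → ℝ} {c : ℝ} (hc : 0 ≤ c) (hf : Integrable f μ) (hg : Integrable g μ)
    (hh : Integrable h μ) (hf0 : 0 ≤ᵐ[μ] f) (hg0 : 0 ≤ᵐ[μ] g) (hh0 : 0 ≤ᵐ[μ] h)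
    (H : ENNReal.ofReal c * ∫⁻ x, ENNReal.ofReal (f x) ∂μ ≤
      (∫⁻ x, ENNReal.ofReal (g x) ∂μ) + ∫⁻ x, ENNReal.ofReal (h x) ∂μ) :
    c * ∫ x, f x ∂μ ≤ (∫ x, g x ∂μ) + ∫ x, h x ∂μ := by
  rw [← ofReal_integral_eq_lintegral_ofReal hf hf0, ← ofReal_integral_eq_lintegral_ofReal hg hg0,
    ← ofReal_integral_eq_lintegral_ofReal hh hh0, ← ENNReal.ofReal_mul hc,
    ← ENNReal.ofReal_add (integral_nonneg_of_ae hg0) (integral_nonneg_of_ae hh0)] at H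
  exact (ENNReal.ofReal_le_ofReal_iff
    (add_nonneg (integral_nonneg_of_ae hg0) (integral_nonneg_of_ae hh0))).1 H

section Conj

variable {u u' v v' : ℝ → ℂ} {a : ℝ}

theorem integral_Ioi_deriv_mul_conj_add
    (hu : ∀ x ∈ Ici a, HasDerivWithinAt u (u' x) (Ici a) x)
    (hv : ∀ x ∈ Ici a, HasDerivWithinAt v (v' x) (Ici a) x)
    (hu2 : MemLp u 2 (volume.restrict (Ioi a))) (hu'2 : MemLp u' 2 (volume.restrict (Ioi a)))
    (hv2 : MemLp v 2 (volume.restrict (Ioi a))) (hv'2 : MemLp v' 2 (volume.restrict (Ioi a))) :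
    ∫ x in Ioi a, (u' x * conj (v x) + u x * conj (v' x)) = -(u a * conj (v a)) :=
  integral_Ioi_eq_neg_of_hasDerivWithinAt (fun x hx => (hu x hx).mul (hv x hx).star)
    (hu2.integrable_mul hv2.star)
    ((hu'2.integrable_mul hv2.star).add (hu2.integrable_mul hv'2.star))

theorem sq_norm_le_integral_Ioi (hu : ∀ x ∈ Ici a, HasDerivWithinAt u (u' x) (Ici a) x)
    (hu2 : MemLp u 2 (volume.restrict (Ioi a))) (hu'2 : MemLp u' 2 (volume.restrict (Ioi a))) :
    ‖u a‖ ^ 2 ≤ (∫ x in Ioi a, ‖u x‖ ^ 2) + ∫ x in Ioi a, ‖u' x‖ ^ 2 := by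
  have hsq := hu2.integrable_norm_pow two_ne_zero
  have hsq' := hu'2.integrable_norm_pow two_ne_zero
  calc ‖u a‖ ^ 2 = ‖∫ x in Ioi a, (u' x * conj (u x) + u x * conj (u' x))‖ := by
        rw [integral_Ioi_deriv_mul_conj_add hu hu hu2 hu'2 hu2 hu'2, norm_neg, mul_conj',
          ← ofReal_pow, norm_real, Real.norm_of_nonneg (sq_nonneg _)]
    _ ≤ ∫ x in Ioi a, ‖u' x * conj (u x) + u x * conj (u' x)‖ :=
        norm_integral_le_integral_norm _
    _ ≤ ∫ x in Ioi a, (‖u x‖ ^ 2 + ‖u' x‖ ^ 2) := by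
        refine integral_mono_of_nonneg (ae_of_all _ fun x => norm_nonneg _) (hsq.add hsq')
          (ae_of_all _ fun x => ?_)
        calc ‖u' x * conj (u x) + u x * conj (u' x)‖ ≤ 2 * ‖u x‖ * ‖u' x‖ := by
              refine (norm_add_le _ _).trans_eq ?_
              simp only [norm_mul, RCLike.norm_conj]
              ring
          _ ≤ ‖u x‖ ^ 2 + ‖u' x‖ ^ 2 := two_mul_le_add_sq _ _
    _ = (∫ x in Ioi a, ‖u x‖ ^ 2) + ∫ x in Ioi a, ‖u' x‖ ^ 2 := integral_add hsq hsq'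

theorem sq_norm_le_integral_Ioi_of_le (hu : ∀ x ∈ Ici a, HasDerivWithinAt u (u' x) (Ici a) x)
    (hu2 : MemLp u 2 (volume.restrict (Ioi a))) (hu'2 : MemLp u' 2 (volume.restrict (Ioi a)))
    {t : ℝ} (ht : a ≤ t) :
    ‖u t‖ ^ 2 ≤ (∫ x in Ioi a, ‖u x‖ ^ 2) + ∫ x in Ioi a, ‖u' x‖ ^ 2 := by
  have hrestrict : volume.restrict (Ioi t) ≤ volume.restrict (Ioi a) :=
    Measure.restrict_mono (Ioi_subset_Ioi ht) le_rfl
  have hmono : ∀ w : ℝ → ℂ, MemLp w 2 (volume.restrict (Ioi a)) →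
      ∫ x in Ioi t, ‖w x‖ ^ 2 ≤ ∫ x in Ioi a, ‖w x‖ ^ 2 := fun w hw =>
    setIntegral_mono_set (hw.integrable_norm_pow two_ne_zero)
      (ae_of_all _ fun x => sq_nonneg _) (Ioi_subset_Ioi ht).eventuallyLE
  calc ‖u t‖ ^ 2 ≤ (∫ x in Ioi t, ‖u x‖ ^ 2) + ∫ x in Ioi t, ‖u' x‖ ^ 2 :=
        sq_norm_le_integral_Ioi
          (fun x hx => (hu x (ht.trans hx)).mono (Ici_subset_Ici.2 ht))
          (hu2.mono_measure hrestrict) (hu'2.mono_measure hrestrict)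
    _ ≤ _ := add_le_add (hmono u hu2) (hmono u' hu'2)

end Conj

section Schrodinger

variable {V : ℝ → ℝ} {η : ℂ} {F F' F'' : ℝ → ℂ}

theorem deriv2_mul_conj_eq (hode : ∀ x, 0 ≤ x → F'' x = (I * V x - η) * F x) {x : ℝ}
    (hx : 0 ≤ x) :
    F'' x * conj (F x) = I * ((V x * ‖F x‖ ^ 2 : ℝ) : ℂ) - η * ((‖F x‖ ^ 2 : ℝ) : ℂ) := by
  rw [hode x hx, mul_assoc, mul_conj']
  push_cast
  ring

theorem norm_deriv2_le (hode : ∀ x, 0 ≤ x → F'' x = (I * V x - η) * F x) {x : ℝ}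
    (hx : 0 ≤ x) : ‖F'' x‖ ≤ (|V x| + ‖η‖) * ‖F x‖ := by
  rw [hode x hx, norm_mul]
  gcongr
  refine (norm_sub_le _ _).trans_eq ?_
  rw [norm_mul, norm_I, one_mul, norm_real, Real.norm_eq_abs]

theorem integrableOn_mul_sq_norm_of_ode (hode : ∀ x, 0 ≤ x → F'' x = (I * V x - η) * F x)
    (hF2 : MemLp F 2 (volume.restrict (Ioi 0))) (hF''2 : MemLp F'' 2 (volume.restrict (Ioi 0))) :
    IntegrableOn (fun x => V x * ‖F x‖ ^ 2) (Ioi 0) := by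
  have hint : IntegrableOn (fun x => F'' x * conj (F x) + η * ((‖F x‖ ^ 2 : ℝ) : ℂ)) (Ioi 0) :=
    (hF''2.integrable_mul hF2.star).add
      ((hF2.integrable_norm_pow two_ne_zero).ofReal.const_mul η)
  refine hint.im.congr ((ae_restrict_iff' measurableSet_Ioi).2 (ae_of_all _ fun x hx => ?_))
  dsimp only
  rw [deriv2_mul_conj_eq hode (le_of_lt hx), sub_add_cancel, RCLike.im_to_complex, I_mul_im,
    ofReal_re]

theorem deriv_mul_conj_zero_eq_of_ode (hode : ∀ x, 0 ≤ x → F'' x = (I * V x - η) * F x)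
    (hF : ∀ x ∈ Ici 0, HasDerivWithinAt F (F' x) (Ici 0) x)
    (hF' : ∀ x ∈ Ici 0, HasDerivWithinAt F' (F'' x) (Ici 0) x)
    (hF2 : MemLp F 2 (volume.restrict (Ioi 0))) (hF'2 : MemLp F' 2 (volume.restrict (Ioi 0)))
    (hF''2 : MemLp F'' 2 (volume.restrict (Ioi 0))) :
    F' 0 * conj (F 0) = -(((∫ x in Ioi 0, ‖F' x‖ ^ 2 : ℝ) : ℂ) +
      I * ((∫ x in Ioi 0, V x * ‖F x‖ ^ 2 : ℝ) : ℂ) - η * ((∫ x in Ioi 0, ‖F x‖ ^ 2 : ℝ) : ℂ)) := by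
  have hQ : IntegrableOn (fun x => ((V x * ‖F x‖ ^ 2 : ℝ) : ℂ)) (Ioi 0) :=
    (integrableOn_mul_sq_norm_of_ode hode hF2 hF''2).ofReal
  have hR : IntegrableOn (fun x => ((‖F x‖ ^ 2 : ℝ) : ℂ)) (Ioi 0) :=
    (hF2.integrable_norm_pow two_ne_zero).ofReal
  have hP : IntegrableOn (fun x => ((‖F' x‖ ^ 2 : ℝ) : ℂ)) (Ioi 0) :=
    (hF'2.integrable_norm_pow two_ne_zero).ofReal
  have hsplit : ∫ x in Ioi 0, (F'' x * conj (F x) + F' x * conj (F' x)) =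
      ∫ x in Ioi 0, (I * ((V x * ‖F x‖ ^ 2 : ℝ) : ℂ) - η * ((‖F x‖ ^ 2 : ℝ) : ℂ) +
        ((‖F' x‖ ^ 2 : ℝ) : ℂ)) := by
    refine setIntegral_congr_fun measurableSet_Ioi fun x hx => ?_
    rw [deriv2_mul_conj_eq hode (le_of_lt hx), mul_conj', ← ofReal_pow]
  have hQR : IntegrableOn (fun x => I * ((V x * ‖F x‖ ^ 2 : ℝ) : ℂ) -
      η * ((‖F x‖ ^ 2 : ℝ) : ℂ)) (Ioi 0) := (hQ.const_mul I).sub (hR.const_mul η)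
  rw [← neg_neg (F' 0 * _), ← integral_Ioi_deriv_mul_conj_add hF' hF hF'2 hF''2 hF2 hF'2, hsplit,
    integral_add hQR hP,
    integral_sub (hQ.const_mul I) (hR.const_mul η), integral_const_mul, integral_const_mul,
    integral_complex_ofReal, integral_complex_ofReal, integral_complex_ofReal]
  ring

end Schrodinger

theorem inv_four_mul_sq_le_of_deriv_eq_one {F F' F'' : ℝ → ℂ} {a S : ℝ} (ha : 1 ≤ a)
    (hF' : ∀ x ∈ Ici (0 : ℝ), HasDerivWithinAt F' (F'' x) (Ici 0) x) (hF'0 : F' 0 = 1)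
    (hF'2 : IntegrableOn (fun x => ‖F' x‖ ^ 2) (Ioi 0))
    (hbound : ∀ x ∈ Icc (0 : ℝ) 1, ‖F'' x‖ ≤ a * ‖F x‖)
    (hFS : ∀ x ∈ Icc (0 : ℝ) 1, ‖F x‖ ^ 2 ≤ S) (hF'S : ∫ x in Ioi 0, ‖F' x‖ ^ 2 ≤ S) :
    (4 * a ^ 2)⁻¹ ≤ S := by
  by_contra! hS
  have ha0 : 0 < a := one_pos.trans_le ha
  have hF''_le : ∀ x ∈ Ico (0 : ℝ) 1, ‖F'' x‖ ≤ 1 / 2 := by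
    intro x hx
    have hFx : ‖F x‖ < (2 * a)⁻¹ := by
      refine (pow_lt_pow_iff_left₀ (norm_nonneg _) (by positivity) two_ne_zero).1 ?_
      calc ‖F x‖ ^ 2 ≤ S := hFS x (Ico_subset_Icc_self hx)
        _ < (4 * a ^ 2)⁻¹ := hS
        _ = (2 * a)⁻¹ ^ 2 := by ring
    calc ‖F'' x‖ ≤ a * ‖F x‖ := hbound x (Ico_subset_Icc_self hx)
      _ ≤ a * (2 * a)⁻¹ := by gcongr
      _ = 1 / 2 := by field_simp
  have hF'_near : ∀ x ∈ Icc (0 : ℝ) 1, ‖F' x - F' 0‖ ≤ 1 / 2 * (x - 0) :=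
    norm_image_sub_le_of_norm_deriv_right_le_segment
      (fun x hx => (hF' x hx.1).continuousWithinAt.mono (Icc_subset_Ici_self))
      (fun x hx => (hF' x hx.1).mono (Ici_subset_Ici.2 hx.1)) hF''_le
  have hF'_large : ∀ x ∈ Ioc (0 : ℝ) 1, 1 / 4 ≤ ‖F' x‖ ^ 2 := by
    intro x hx
    have hnear := hF'_near x (Ioc_subset_Icc_self hx)
    have hrev := norm_sub_norm_le (F' 0) (F' 0 - F' x)
    rw [sub_sub_cancel, norm_sub_rev, hF'0, norm_one] at hrev
    rw [hF'0] at hnear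
    have : 1 / 2 ≤ ‖F' x‖ := by linarith [hx.2]
    nlinarith
  have hP := mul_sub_le_setIntegral_Ioi zero_le_one hF'2 (fun x _ => sq_nonneg _) hF'_large
  have ha2 : (4 * a ^ 2)⁻¹ ≤ 1 / 4 := by
    rw [one_div]
    exact inv_anti₀ (by norm_num) (by nlinarith)
  linarith

theorem add_le_mul_norm_of_eq {P Q R c : ℝ} {η z : ℂ} (hQ : 0 ≤ Q) (hR : 0 ≤ R) (hc : 0 < c)
    (hη : ‖η‖ ≤ c / 2) (hz : ‖z‖ = ‖(P : ℂ) + I * Q - η * R‖) (hcR : c * R ≤ P + Q) :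
    R + P ≤ 5 * (1 + c⁻¹) * ‖z‖ := by
  -- `‖P + I * Q‖ ≥ (P + Q) / √2`, and `1 / √2 - 1 / 2 > 1 / 5`
  have hN : ‖(P : ℂ) + I * Q‖ ^ 2 = P ^ 2 + Q ^ 2 := by
    rw [Complex.sq_norm, mul_comm I, normSq_add_mul_I]
  have hηR : ‖η * R‖ ≤ c / 2 * R := by
    rw [norm_mul, norm_real, Real.norm_of_nonneg hR]
    exact mul_le_mul_of_nonneg_right hη hR
  have hlow : ‖(P : ℂ) + I * Q‖ - (P + Q) / 2 ≤ ‖z‖ := by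
    rw [hz]
    linarith [norm_sub_norm_le ((P : ℂ) + I * Q) (η * R)]
  have hPQ : P + Q ≤ 5 * ‖z‖ := by
    nlinarith [sq_nonneg (P - Q), norm_nonneg ((P : ℂ) + I * Q)]
  have hRc : R ≤ c⁻¹ * (P + Q) := by
    rw [inv_mul_eq_div, le_div_iff₀' hc]
    exact hcR
  nlinarith [inv_pos.2 hc]

theorem one_div_le_and_le_of_sq_le {x S K δ : ℝ} (hx : 0 ≤ x) (hδ : 0 < δ) (hδ1 : δ ≤ 1)
    (hsq : x ^ 2 ≤ S) (hδS : δ ≤ S) (hSK : S ≤ K * x) : 1 / (K / δ) ≤ x ∧ x ≤ K / δ := by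
  have hK : 0 < K := pos_of_mul_pos_left (hδ.trans_le (hδS.trans hSK)) hx
  have hxK : x ≤ K := by nlinarith
  constructor
  · rw [one_div_div, div_le_iff₀ hK]
    linarith
  · exact hxK.trans (le_div_self hK.le hδ hδ1)

/-- Uniform bounds on the Dirichlet data: there is `C > 0` such that for every `|η| ≤ c/2`,
any normalized (`F'(0)=1`) square-integrable solution of `-F'' + i x^β F - η F = 0`
satisfies `1/C ≤ |F(0)| ≤ C`. -/
theorem stmt_5 (β : ℝ) (hβ : 0 ≤ β) (c : ℝ) (hc : 0 < c)
    (hspec : ∀ u u' : ℝ → ℂ,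
        (∀ x ∈ Ici (0:ℝ), HasDerivWithinAt u (u' x) (Ici 0) x) →
        ContinuousOn u' (Ici 0) →
        IntegrableOn (fun x => ‖u x‖ ^ 2) (Ioi 0) →
        IntegrableOn (fun x => ‖u' x‖ ^ 2) (Ioi 0) →
        ENNReal.ofReal c * (∫⁻ x in Ioi (0:ℝ), ENNReal.ofReal (‖u x‖ ^ 2)) ≤
          (∫⁻ x in Ioi (0:ℝ), ENNReal.ofReal (‖u' x‖ ^ 2)) +
            ∫⁻ x in Ioi (0:ℝ), ENNReal.ofReal (x ^ β * ‖u x‖ ^ 2)) :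
    ∃ C : ℝ, 0 < C ∧
      ∀ η : ℂ, ‖η‖ ≤ c / 2 →
        ∀ F F' F'' : ℝ → ℂ,
          (∀ x ∈ Ici (0:ℝ), HasDerivWithinAt F (F' x) (Ici 0) x) →
          (∀ x ∈ Ici (0:ℝ), HasDerivWithinAt F' (F'' x) (Ici 0) x) →
          ContinuousOn F'' (Ici 0) →
          IntegrableOn (fun x => ‖F x‖ ^ 2) (Ioi 0) →
          IntegrableOn (fun x => ‖F' x‖ ^ 2) (Ioi 0) →
          IntegrableOn (fun x => ‖F'' x‖ ^ 2) (Ioi 0) →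
          F' 0 = 1 →
          (∀ x : ℝ, 0 ≤ x →
            -F'' x + Complex.I * ((x ^ β : ℝ) : ℂ) * F x - η * F x = 0) →
          1 / C ≤ ‖F 0‖ ∧ ‖F 0‖ ≤ C := by
  set a : ℝ := 1 + c / 2 with ha
  have ha1 : 1 ≤ a := by linarith
  refine ⟨5 * (1 + c⁻¹) / (4 * a ^ 2)⁻¹, by positivity, ?_⟩
  intro η hη F F' F'' hF hF' hF''c hF2 hF'2 hF''2 hF'0 heq
  have hode : ∀ x, 0 ≤ x → F'' x = (I * ((x ^ β : ℝ) : ℂ) - η) * F x := fun x hx => by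
    linear_combination -heq x hx
  have hF'c : ContinuousOn F' (Ici 0) := fun x hx => (hF' x hx).continuousWithinAt
  have hFL := memLp_two_restrict_Ioi_of_continuousOn
    (fun x hx => (hF x hx).continuousWithinAt) hF2
  have hF'L := memLp_two_restrict_Ioi_of_continuousOn hF'c hF'2
  have hF''L := memLp_two_restrict_Ioi_of_continuousOn hF''c hF''2
  have hQ_nonneg : ∀ᵐ x ∂volume.restrict (Ioi 0), 0 ≤ x ^ β * ‖F x‖ ^ 2 :=
    (ae_restrict_iff' measurableSet_Ioi).2 (ae_of_all _ fun x hx =>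
      mul_nonneg (Real.rpow_nonneg (le_of_lt hx) β) (sq_nonneg _))
  have hcR := mul_integral_le_add_of_lintegral hc.le hF2 hF'2
    (integrableOn_mul_sq_norm_of_ode hode hFL hF''L) (ae_of_all _ fun x => sq_nonneg _)
    (ae_of_all _ fun x => sq_nonneg _) hQ_nonneg (hspec F F' hF hF'c hF2 hF'2)
  have hF0 := congrArg norm (deriv_mul_conj_zero_eq_of_ode hode hF hF' hFL hF'L hF''L)
  rw [hF'0, one_mul, RCLike.norm_conj, norm_neg] at hF0
  have hbound : ∀ x ∈ Icc (0 : ℝ) 1, ‖F'' x‖ ≤ a * ‖F x‖ := fun x hx => by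
    refine (norm_deriv2_le hode hx.1).trans (mul_le_mul_of_nonneg_right ?_ (norm_nonneg _))
    rw [abs_of_nonneg (Real.rpow_nonneg hx.1 β)]
    linarith [Real.rpow_le_one hx.1 hx.2 hβ]
  refine one_div_le_and_le_of_sq_le (norm_nonneg _) (by positivity)
    (inv_le_one_of_one_le₀ (by nlinarith)) (sq_norm_le_integral_Ioi hF hFL hF'L)
    (inv_four_mul_sq_le_of_deriv_eq_one ha1 hF' hF'0 hF'2 hbound
      (fun x hx => sq_norm_le_integral_Ioi_of_le hF hFL hF'L hx.1)
      (le_add_of_nonneg_left (setIntegral_nonneg measurableSet_Ioi fun x _ => sq_nonneg _)))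
    (add_le_mul_norm_of_eq (integral_nonneg_of_ae hQ_nonneg)
      (setIntegral_nonneg measurableSet_Ioi fun x _ => sq_nonneg _) hc hη hF0 hcR)
end

section
/- Let β ≥ 0, a > 0, h > 0 and λ ∈ ℂ. Suppose v : [0,∞) → ℂ is continuously differentiable with v and v' square-integrable on (0,∞), twice differentiable at every point of (0,a) ∪ (a,∞), satisfies −h² v''(x) + i (x−a)₊^β v(x) − λ² v(x) = 0 for all x ∈ (0,a) ∪ (a,∞), and satisfies v(0) = 0 or v'(0) = 0. Then ∫₀^∞ (x−a)₊^β |v(x)|² dx = Im(λ²) · ∫₀^∞ |v(x)|² dx, where (x−a)₊ = max(x−a,0). -/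
/-!
Multiplying the equation by `v̄` and taking imaginary parts shows that the flux
`G = h² Im(v' v̄)` has derivative `((x-a)₊^β - Im λ²) |v|²` away from `x = a`, while `G(0) = 0` by
the boundary condition; hence `∫₀^T ((x-a)₊^β - Im λ²) |v|² = G(T)`. Since `v, v' ∈ L²`, `G` is
integrable, so `|G(T)| ≤ 1` for arbitrarily large `T`; along those `T` the nonnegative integrals
`∫₀^T (x-a)₊^β |v|²` stay bounded, so `(x-a)₊^β |v|²` is integrable. Then `G(T)` converges to
`∫₀^∞ ((x-a)₊^β - Im λ²) |v|²`, and an integrable function can only converge to `0`.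
-/

open MeasureTheory Set Filter Topology ComplexConjugate
open scoped ENNReal

theorem MeasureTheory.IntegrableAtFilter.frequently_norm_le {α E : Type*} [MeasurableSpace α]
    [NormedAddCommGroup E] {μ : Measure α} {l : Filter α} {f : α → E}
    (hf : IntegrableAtFilter f l μ) (hl : ∀ s ∈ l, μ s = ∞) {ε : ℝ} (hε : 0 < ε) :
    ∃ᶠ x in l, ‖f x‖ ≤ ε := by
  intro hbig
  simp only [not_le] at hbig
  obtain ⟨u, hul, hu⟩ := hf
  have hfin : μ (u ∩ {x | ε < ‖f x‖}) < ∞ := by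
    rw [← Measure.restrict_apply_self]
    exact (measure_mono inter_subset_right).trans_lt
      ((hu.mono_set inter_subset_left).measure_norm_gt_lt_top hε)
  exact hfin.ne (hl _ (inter_mem hul hbig))

theorem Real.volume_eq_top_of_mem_atTop {s : Set ℝ} (hs : s ∈ atTop) : volume s = ∞ := by
  obtain ⟨b, hb⟩ := mem_atTop_sets.1 hs
  exact top_le_iff.1 (volume_Ici (a := b) ▸ measure_mono hb)

theorem integrableOn_Ioi_of_nonneg_of_frequently_intervalIntegral_le {g : ℝ → ℝ} {a C : ℝ}
    (hg0 : ∀ x ∈ Ioi a, 0 ≤ g x) (hgi : ∀ T, IntegrableOn g (Ioc a T))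
    (hC : ∃ᶠ T in atTop, ∫ x in a..T, g x ≤ C) : IntegrableOn g (Ioi a) := by
  have := frequently_iff_neBot.1 (hC.and_eventually (eventually_ge_atTop a))
  refine integrableOn_Ioi_of_intervalIntegral_norm_bounded C a hgi
    (l := atTop ⊓ 𝓟 {T | (∫ x in a..T, g x ≤ C) ∧ a ≤ T}) (tendsto_id.mono_left inf_le_left) ?_
  filter_upwards [mem_inf_of_right (mem_principal_self _)] with T ⟨hTC, haT⟩
  rw [intervalIntegral.integral_of_le haT] at hTC ⊢
  refine le_of_eq_of_le (setIntegral_congr_fun measurableSet_Ioc fun x hx => ?_) hTC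
  exact Real.norm_of_nonneg (hg0 x hx.1)

theorem integrableOn_Ioi_of_intervalIntegral_sub_eq {g q G : ℝ → ℝ} {a c : ℝ}
    (hg0 : ∀ x ∈ Ioi a, 0 ≤ g x) (hgi : ∀ T, IntegrableOn g (Ioc a T))
    (hq : IntegrableOn q (Ioi a)) (hG : IntegrableAtFilter G atTop)
    (hGg : ∀ T, a ≤ T → ∫ x in a..T, (g x - c * q x) = G T) : IntegrableOn g (Ioi a) := by
  have hQ : Tendsto (fun T => ∫ x in a..T, q x) atTop (𝓝 (∫ x in Ioi a, q x)) :=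
    intervalIntegral_tendsto_integral_Ioi a hq tendsto_id
  refine integrableOn_Ioi_of_nonneg_of_frequently_intervalIntegral_le hg0 hgi
    (C := c * (∫ x in Ioi a, q x) + 2) ?_
  refine ((hG.frequently_norm_le (fun _ => Real.volume_eq_top_of_mem_atTop) one_pos).and_eventually
    (((hQ.const_mul c).eventually (eventually_le_nhds (lt_add_one _))).and
      (eventually_ge_atTop a))).mono ?_
  rintro T ⟨hGT, hcQ, haT⟩
  have hqT := (intervalIntegrable_iff_integrableOn_Ioc_of_le haT).2
    (hq.mono_set Ioc_subset_Ioi_self)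
  have hgT := (intervalIntegrable_iff_integrableOn_Ioc_of_le haT).2 (hgi T)
  have hGgT := hGg T haT
  rw [intervalIntegral.integral_sub hgT (hqT.const_mul c), intervalIntegral.integral_const_mul]
    at hGgT
  rw [Real.norm_eq_abs] at hGT
  linarith [le_abs_self (G T)]

def energyFlux (h : ℝ) (v v' : ℝ → ℂ) (x : ℝ) : ℝ := h ^ 2 * (v' x * conj (v x)).im

section EnergyFlux

variable {h : ℝ} {v v' : ℝ → ℂ}

theorem energyFlux_zero_of_bc (hbc : v 0 = 0 ∨ v' 0 = 0) : energyFlux h v v' 0 = 0 := by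
  rcases hbc with h0 | h0 <;> simp [energyFlux, h0]

theorem hasDerivAt_energyFlux {lam : ℂ} {V : ℝ → ℝ} {v'' : ℝ → ℂ} {x : ℝ}
    (hv : HasDerivAt v (v' x) x) (hv' : HasDerivAt v' (v'' x) x)
    (hode : -(h : ℂ) ^ 2 * v'' x + Complex.I * (V x : ℂ) * v x - lam ^ 2 * v x = 0) :
    HasDerivAt (energyFlux h v v') (V x * ‖v x‖ ^ 2 - (lam ^ 2).im * ‖v x‖ ^ 2) x := by
  have hflux : HasDerivAt (energyFlux h v v')
      (h ^ 2 * (v'' x * conj (v x) + v' x * conj (v' x)).im) x :=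
    (Complex.imCLM.hasFDerivAt.comp_hasDerivAt x (hv'.mul hv.star)).const_mul (h ^ 2)
  have hsq : (h : ℂ) ^ 2 * v'' x = Complex.I * V x * v x - lam ^ 2 * v x := by
    linear_combination -hode
  -- `v' v̄'` is real, so only `(h² v'') v̄ = (i V - λ²) |v|²` contributes to the imaginary part
  have key : (h : ℂ) ^ 2 * (v'' x * conj (v x) + v' x * conj (v' x))
      = Complex.I * (V x * ‖v x‖ ^ 2 : ℝ) - lam ^ 2 * (‖v x‖ ^ 2 : ℝ)
        + (h ^ 2 * ‖v' x‖ ^ 2 : ℝ) := by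
    push_cast
    rw [← Complex.mul_conj', ← Complex.mul_conj']
    linear_combination conj (v x) * hsq
  convert hflux using 1
  rw [← Complex.im_ofReal_mul, Complex.ofReal_pow, key]
  simp only [Complex.add_im, Complex.sub_im, Complex.mul_im, Complex.I_re, Complex.I_im,
    Complex.ofReal_re, Complex.ofReal_im]
  ring

theorem integrable_energyFlux {μ : Measure ℝ} (hv : MemLp v 2 μ) (hv' : MemLp v' 2 μ) :
    Integrable (energyFlux h v v') μ :=
  ((hv'.integrable_mul hv.star).im).const_mul (h ^ 2)

variable {lam : ℂ} {V : ℝ → ℝ} {v'' : ℝ → ℂ} {S : Set ℝ}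

theorem intervalIntegral_eq_energyFlux (hV : ContinuousOn V (Ici 0))
    (hv : ∀ x ∈ Ici (0 : ℝ), HasDerivWithinAt v (v' x) (Ici 0) x)
    (hv'c : ContinuousOn v' (Ici 0)) (hS : S.Countable)
    (hv' : ∀ x ∈ Ioi (0 : ℝ) \ S, HasDerivAt v' (v'' x) x)
    (hode : ∀ x ∈ Ioi (0 : ℝ) \ S,
      -(h : ℂ) ^ 2 * v'' x + Complex.I * (V x : ℂ) * v x - lam ^ 2 * v x = 0)
    (hflux0 : energyFlux h v v' 0 = 0) {T : ℝ} (hT : 0 ≤ T) :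
    ∫ x in (0 : ℝ)..T, (V x * ‖v x‖ ^ 2 - (lam ^ 2).im * ‖v x‖ ^ 2) = energyFlux h v v' T := by
  have hvc : ContinuousOn v (Ici 0) := fun x hx => (hv x hx).continuousWithinAt
  have hsub : Icc 0 T ⊆ Ici 0 := Icc_subset_Ici_self
  rw [integral_eq_of_hasDerivAt_off_countable_of_le (energyFlux h v v') _ hT hS, hflux0, sub_zero]
  · exact (continuousOn_const.mul (Complex.continuous_im.comp_continuousOn
      (hv'c.mul (continuous_star.comp_continuousOn hvc)))).mono hsub
  · rintro x ⟨hx, hxS⟩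
    exact hasDerivAt_energyFlux ((hv x (le_of_lt hx.1)).hasDerivAt (Ici_mem_nhds hx.1))
      (hv' x ⟨hx.1, hxS⟩) (hode x ⟨hx.1, hxS⟩)
  · refine ContinuousOn.intervalIntegrable_of_Icc hT ?_
    exact ((hV.mul (hvc.norm.pow 2)).sub (continuousOn_const.mul (hvc.norm.pow 2))).mono hsub

theorem integral_Ioi_potential_mul_norm_sq_eq (hV0 : ∀ x ∈ Ioi (0 : ℝ), 0 ≤ V x)
    (hV : ContinuousOn V (Ici 0))
    (hv : ∀ x ∈ Ici (0 : ℝ), HasDerivWithinAt v (v' x) (Ici 0) x)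
    (hv'c : ContinuousOn v' (Ici 0))
    (hvL2 : IntegrableOn (fun x => ‖v x‖ ^ 2) (Ioi 0))
    (hv'L2 : IntegrableOn (fun x => ‖v' x‖ ^ 2) (Ioi 0)) (hS : S.Countable)
    (hv' : ∀ x ∈ Ioi (0 : ℝ) \ S, HasDerivAt v' (v'' x) x)
    (hode : ∀ x ∈ Ioi (0 : ℝ) \ S,
      -(h : ℂ) ^ 2 * v'' x + Complex.I * (V x : ℂ) * v x - lam ^ 2 * v x = 0)
    (hbc : v 0 = 0 ∨ v' 0 = 0) :
    ∫ x in Ioi (0 : ℝ), V x * ‖v x‖ ^ 2 = (lam ^ 2).im * ∫ x in Ioi (0 : ℝ), ‖v x‖ ^ 2 := by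
  set c := (lam ^ 2).im
  have hvc : ContinuousOn v (Ici 0) := fun x hx => (hv x hx).continuousWithinAt
  have hL2 {w : ℝ → ℂ} (hw : ContinuousOn w (Ici 0))
      (hw2 : IntegrableOn (fun x => ‖w x‖ ^ 2) (Ioi 0) volume) :
      MemLp w 2 (volume.restrict (Ioi 0)) :=
    (memLp_two_iff_integrable_sq_norm
      ((hw.mono Ioi_subset_Ici_self).aestronglyMeasurable measurableSet_Ioi)).2 hw2
  have hflux : IntegrableAtFilter (energyFlux h v v') atTop :=
    ⟨Ioi 0, Ioi_mem_atTop 0, integrable_energyFlux (hL2 hvc hvL2) (hL2 hv'c hv'L2)⟩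
  have hFTC (T : ℝ) (hT : 0 ≤ T) := intervalIntegral_eq_energyFlux hV hv hv'c hS hv' hode
    (energyFlux_zero_of_bc hbc) hT
  have hloc (T : ℝ) : IntegrableOn (fun x => V x * ‖v x‖ ^ 2) (Ioc 0 T) :=
    ((hV.mul (hvc.norm.pow 2)).mono Icc_subset_Ici_self).integrableOn_Icc.mono_set
      Ioc_subset_Icc_self
  have hg : IntegrableOn (fun x => V x * ‖v x‖ ^ 2) (Ioi 0) :=
    integrableOn_Ioi_of_intervalIntegral_sub_eq
      (fun x hx => mul_nonneg (hV0 x hx) (sq_nonneg _)) hloc hvL2 hflux hFTC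
  have hF := hg.sub (hvL2.const_mul c)
  have hlim : Tendsto (energyFlux h v v') atTop
      (𝓝 (∫ x in Ioi (0 : ℝ), (V x * ‖v x‖ ^ 2 - c * ‖v x‖ ^ 2))) :=
    (intervalIntegral_tendsto_integral_Ioi 0 hF tendsto_id).congr'
      ((eventually_ge_atTop 0).mono hFTC)
  have hzero := hflux.eq_zero_of_tendsto (fun _ => Real.volume_eq_top_of_mem_atTop) hlim
  rw [integral_sub hg (hvL2.const_mul c), integral_const_mul, sub_eq_zero] at hzero
  exact hzero

end EnergyFlux

theorem stmt_10_general (β a h : ℝ) (hβ : 0 ≤ β) (lam : ℂ)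
    (v v' v'' : ℝ → ℂ)
    (hv1 : ∀ x ∈ Ici (0:ℝ), HasDerivWithinAt v (v' x) (Ici 0) x)
    (hv1c : ContinuousOn v' (Ici 0))
    (hvL2 : IntegrableOn (fun x => ‖v x‖ ^ 2) (Ioi 0))
    (hv'L2 : IntegrableOn (fun x => ‖v' x‖ ^ 2) (Ioi 0))
    (hv2 : ∀ x ∈ Ioo (0:ℝ) a ∪ Ioi a, HasDerivAt v' (v'' x) x)
    (hbc : v 0 = 0 ∨ v' 0 = 0)
    (hode : ∀ x ∈ Ioo (0:ℝ) a ∪ Ioi a,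
      -(h:ℂ) ^ 2 * v'' x + Complex.I * (((max (x - a) 0) ^ β : ℝ) : ℂ) * v x
        - lam ^ 2 * v x = 0) :
    ∫ x in Ioi (0:ℝ), (max (x - a) 0) ^ β * ‖v x‖ ^ 2
      = (lam ^ 2).im * ∫ x in Ioi (0:ℝ), ‖v x‖ ^ 2 := by
  have hsplit : Ioi (0 : ℝ) \ {a} ⊆ Ioo 0 a ∪ Ioi a := fun x ⟨hx0, hxa⟩ =>
    (lt_or_gt_of_ne hxa).imp (fun hxa => ⟨hx0, hxa⟩) id
  have hWc : Continuous fun x : ℝ => max (x - a) 0 ^ β :=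
    (Real.continuous_rpow_const hβ).comp ((continuous_sub_right a).max continuous_const)
  exact integral_Ioi_potential_mul_norm_sq_eq (fun x _ => Real.rpow_nonneg (le_max_right _ _) β)
    hWc.continuousOn hv1 hv1c hvL2 hv'L2 (countable_singleton a)
    (fun x hx => hv2 x (hsplit hx)) (fun x hx => hode x (hsplit hx)) hbc

/-- Energy identity for solutions of the complex absorbing potential problem
`-h²v'' + i(x-a)₊^β v - λ²v = 0` on `(0,∞)` with `v(0) = 0` or `v'(0) = 0`:
`∫₀^∞ (x-a)₊^β |v|² = Im(λ²) ∫₀^∞ |v|²`. -/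
theorem stmt_10 (β a h : ℝ) (hβ : 0 ≤ β) (ha : 0 < a) (hh : 0 < h) (lam : ℂ)
    (v v' v'' : ℝ → ℂ)
    (hv1 : ∀ x ∈ Ici (0:ℝ), HasDerivWithinAt v (v' x) (Ici 0) x)
    (hv1c : ContinuousOn v' (Ici 0))
    (hvL2 : IntegrableOn (fun x => ‖v x‖ ^ 2) (Ioi 0))
    (hv'L2 : IntegrableOn (fun x => ‖v' x‖ ^ 2) (Ioi 0))
    (hv2 : ∀ x ∈ Ioo (0:ℝ) a ∪ Ioi a, HasDerivAt v' (v'' x) x)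
    (hbc : v 0 = 0 ∨ v' 0 = 0)
    (hode : ∀ x ∈ Ioo (0:ℝ) a ∪ Ioi a,
      -(h:ℂ) ^ 2 * v'' x + Complex.I * (((max (x - a) 0) ^ β : ℝ) : ℂ) * v x
        - lam ^ 2 * v x = 0) :
    ∫ x in Ioi (0:ℝ), (max (x - a) 0) ^ β * ‖v x‖ ^ 2
      = (lam ^ 2).im * ∫ x in Ioi (0:ℝ), ‖v x‖ ^ 2 :=
  stmt_10_general β a h hβ lam v v' v'' hv1 hv1c hvL2 hv'L2 hv2 hbc hode
end

section
/- Let β > 0, a > 0, σ > 0, δ > 0, b > 0 with a + σ < b − 2δ, K > 0, h > 0 with K h² < σ^β, and λ ∈ ℂ with Im(λ²) ≤ K h². Suppose v : [0,∞) → ℂ is continuously differentiable with v and v' square-integrable on (0,∞), twice differentiable at every point of (0,a) ∪ (a,∞), satisfies −h² v''(x) + i (x−a)₊^β v(x) − λ² v(x) = 0 for all x ∈ (0,a) ∪ (a,∞), and satisfies v(0) = 0 or v'(0) = 0. Then ∫₀^b |v(x)|² dx ≤ (1 + σ^β/(σ^β − K h²)) · ∫₀^{b−2δ} |v(x)|²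 dx, where (x−a)₊ = max(x−a,0). -/
/-!
The flux `J = h² Im (v' v̄)` satisfies `J' = ((x - a)₊^β - Im λ²) |v|²` off `x = a`, and `J 0 = 0`
by the boundary condition. Since `v, v' ∈ L²`, `J R` is arbitrarily small for suitable large `R`,
so `σ^β ∫_{a+σ}^R |v|² ≤ ∫_0^R (x - a)₊^β |v|² ≤ ε + K h² ∫_0^R |v|²`. Absorbing the part of the
right side beyond `a + σ` into the left bounds the mass on `[b - 2δ, b]` by
`K h² / (σ^β - K h²)` times the mass on `[0, b - 2δ]`.
-/

open MeasureTheory Set ComplexConjugate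

lemma Complex.im_mul_conj_le (z w : ℂ) : (z * conj w).im ≤ ‖z‖ ^ 2 + ‖w‖ ^ 2 :=
  calc (z * conj w).im ≤ ‖z‖ * ‖w‖ := by simpa using Complex.im_le_norm (z * conj w)
    _ ≤ ‖z‖ ^ 2 + ‖w‖ ^ 2 := by nlinarith [sq_nonneg (‖z‖ - ‖w‖), norm_nonneg z, norm_nonneg w]

lemma hasDerivAt_im_mul_conj {f f' : ℝ → ℂ} {g : ℂ} {x : ℝ} (hf : HasDerivAt f (f' x) x)
    (hf' : HasDerivAt f' g x) :
    HasDerivAt (fun y => (f' y * conj (f y)).im) (g * conj (f x)).im x := by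
  have h : HasDerivAt (fun y => (f' y * conj (f y)).im)
      (g * conj (f x) + f' x * conj (f' x)).im x :=
    Complex.imCLM.hasFDerivAt.comp_hasDerivAt x (hf'.mul hf.star)
  rwa [Complex.mul_conj', Complex.add_im, ← Complex.ofReal_pow, Complex.ofReal_im, add_zero] at h

lemma im_mul_conj_of_schrodinger {h q : ℝ} {μ z w : ℂ}
    (hw : -(h : ℂ) ^ 2 * w + Complex.I * (q : ℂ) * z - μ * z = 0) :
    h ^ 2 * (w * conj z).im = (q - μ.im) * ‖z‖ ^ 2 := by
  have hw' : (h : ℂ) ^ 2 * w = (Complex.I * q - μ) * z := by linear_combination -hw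
  calc h ^ 2 * (w * conj z).im = ((h : ℂ) ^ 2 * w * conj z).im := by
        rw [mul_assoc, ← Complex.ofReal_pow, Complex.im_ofReal_mul]
    _ = ((Complex.I * q - μ) * (‖z‖ ^ 2 : ℝ)).im := by
        rw [hw', mul_assoc, Complex.mul_conj', Complex.ofReal_pow]
    _ = (q - μ.im) * ‖z‖ ^ 2 := by rw [Complex.im_mul_ofReal]; simp

lemma exists_ge_lt_of_integrableOn_Ioi {f : ℝ → ℝ} {c : ℝ} (hf : IntegrableOn f (Ioi c))
    {ε : ℝ} (hε : 0 < ε) (b : ℝ) : ∃ R, b ≤ R ∧ f R < ε := by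
  by_contra! hge
  have hconst : IntegrableOn (fun _ => ε) (Ioi (max b c)) := by
    refine (hf.mono_set (Ioi_subset_Ioi (le_max_right b c))).mono' aestronglyMeasurable_const ?_
    filter_upwards [ae_restrict_mem measurableSet_Ioi] with x hx
    rw [Real.norm_of_nonneg hε.le]
    exact hge x ((le_max_left b c).trans hx.le)
  have hfin := (integrable_const_iff.1 hconst).resolve_left hε.ne'
  simpa using hfin.measure_univ_lt_top

lemma ContinuousOn.intervalIntegrable_of_Ici {E : Type*} [NormedAddCommGroup E] {f : ℝ → E}
    {c s t : ℝ} (hf : ContinuousOn f (Ici c)) (hs : c ≤ s) (hst : s ≤ t) :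
    IntervalIntegrable f volume s t :=
  (hf.mono fun _ hx => hs.trans hx.1).intervalIntegrable_of_Icc hst

lemma continuous_posPart_rpow {β : ℝ} (hβ : 0 ≤ β) (a : ℝ) :
    Continuous fun x : ℝ => (max (x - a) 0) ^ β :=
  (Real.continuous_rpow_const hβ).comp (by fun_prop)

lemma rpow_mul_integral_le_integral_posPart_rpow_mul {f : ℝ → ℝ} (hf0 : ∀ x, 0 ≤ f x)
    (hf : ContinuousOn f (Ici 0)) {a σ β R : ℝ} (haσ : 0 ≤ a + σ) (hσ : 0 ≤ σ) (hβ : 0 ≤ β)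
    (hR : a + σ ≤ R) :
    σ ^ β * ∫ x in (a + σ)..R, f x ≤ ∫ x in 0..R, (max (x - a) 0) ^ β * f x := by
  have hqf : ContinuousOn (fun x => (max (x - a) 0) ^ β * f x) (Ici 0) :=
    (continuous_posPart_rpow hβ a).continuousOn.mul hf
  rw [← intervalIntegral.integral_const_mul]
  calc ∫ x in (a + σ)..R, σ ^ β * f x ≤ ∫ x in (a + σ)..R, (max (x - a) 0) ^ β * f x := by
        refine intervalIntegral.integral_mono_on hR
          ((hf.intervalIntegrable_of_Ici haσ hR).const_mul _)
          (hqf.intervalIntegrable_of_Ici haσ hR) fun x hx => ?_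
        gcongr
        · exact hf0 x
        · exact le_max_of_le_left (by linarith [hx.1])
    _ ≤ ∫ x in 0..R, (max (x - a) 0) ^ β * f x :=
        intervalIntegral.integral_mono_interval haσ hR le_rfl
          (Filter.Eventually.of_forall fun x => mul_nonneg (by positivity) (hf0 x))
          (hqf.intervalIntegrable_of_Ici le_rfl (haσ.trans hR))

theorem integral_posPart_rpow_mul_sq_eq {β a h : ℝ} {lam : ℂ} {v v' v'' : ℝ → ℂ} (hβ : 0 ≤ β)
    (hv1 : ∀ x ∈ Ici (0:ℝ), HasDerivWithinAt v (v' x) (Ici 0) x)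
    (hv1c : ContinuousOn v' (Ici 0))
    (hv2 : ∀ x ∈ Ioo (0:ℝ) a ∪ Ioi a, HasDerivAt v' (v'' x) x)
    (hbc : v 0 = 0 ∨ v' 0 = 0)
    (hode : ∀ x ∈ Ioo (0:ℝ) a ∪ Ioi a,
      -(h:ℂ) ^ 2 * v'' x + Complex.I * (((max (x - a) 0) ^ β : ℝ) : ℂ) * v x
        - lam ^ 2 * v x = 0)
    {R : ℝ} (hR : 0 ≤ R) :
    ∫ x in 0..R, (max (x - a) 0) ^ β * ‖v x‖ ^ 2
      = (lam ^ 2).im * (∫ x in 0..R, ‖v x‖ ^ 2) + h ^ 2 * (v' R * conj (v R)).im := by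
  have hvc : ContinuousOn v (Ici 0) := fun x hx => (hv1 x hx).continuousWithinAt
  have hq := (continuous_posPart_rpow hβ a).continuousOn (s := Ici 0)
  have hflux : ContinuousOn (fun y => h ^ 2 * (v' y * conj (v y)).im) (Ici 0) :=
    continuousOn_const.mul (Complex.continuous_im.comp_continuousOn
      (hv1c.mul (Complex.continuous_conj.comp_continuousOn hvc)))
  have hderiv : ∀ x ∈ Ioo 0 R \ {a}, HasDerivAt (fun y => h ^ 2 * (v' y * conj (v y)).im)
      (((max (x - a) 0) ^ β - (lam ^ 2).im) * ‖v x‖ ^ 2) x := by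
    rintro x ⟨⟨hx0, -⟩, hxa⟩
    have hx : x ∈ Ioo 0 a ∪ Ioi a := by
      rcases lt_or_gt_of_ne hxa with hlt | hgt
      exacts [Or.inl ⟨hx0, hlt⟩, Or.inr hgt]
    have hvx : HasDerivAt v (v' x) x := (hv1 x hx0.le).hasDerivAt (Ici_mem_nhds hx0)
    rw [← im_mul_conj_of_schrodinger (hode x hx)]
    exact (hasDerivAt_im_mul_conj hvx (hv2 x hx)).const_mul _
  have hIv : IntervalIntegrable (fun x => ‖v x‖ ^ 2) volume 0 R :=
    (hvc.norm.pow 2).intervalIntegrable_of_Ici le_rfl hR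
  have hIq : IntervalIntegrable (fun x => (max (x - a) 0) ^ β * ‖v x‖ ^ 2) volume 0 R :=
    (hq.mul (hvc.norm.pow 2)).intervalIntegrable_of_Ici le_rfl hR
  have hFTC := integral_eq_of_hasDerivAt_off_countable_of_le _ _ hR (countable_singleton a)
    (hflux.mono Icc_subset_Ici_self) hderiv (by simpa only [sub_mul] using hIq.sub (hIv.const_mul _))
  have hflux0 : h ^ 2 * (v' 0 * conj (v 0)).im = 0 := by rcases hbc with h0 | h0 <;> simp [h0]
  simp only [sub_mul] at hFTC
  rw [intervalIntegral.integral_sub hIq (hIv.const_mul _), intervalIntegral.integral_const_mul,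
    hflux0] at hFTC
  linarith

lemma integral_Ioo_le_of_forall_tail {f : ℝ → ℝ} (hf0 : ∀ x, 0 ≤ f x)
    (hf : ContinuousOn f (Ici 0)) {p s t c D : ℝ} (hp : 0 ≤ p) (hps : p ≤ s) (hst : s ≤ t)
    (hc : 0 ≤ c) (hcD : c < D)
    (H : ∀ ε > 0, ∃ R, t ≤ R ∧ D * ∫ x in p..R, f x ≤ ε + c * ∫ x in 0..R, f x) :
    ∫ x in Ioo 0 t, f x ≤ (1 + D / (D - c)) * ∫ x in Ioo 0 s, f x := by
  have hs : 0 ≤ s := hp.trans hps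
  have hI : ∀ {u w}, 0 ≤ u → u ≤ w → IntervalIntegrable f volume u w :=
    hf.intervalIntegrable_of_Ici
  have htail : (D - c) * ∫ x in s..t, f x ≤ c * ∫ x in 0..s, f x := by
    refine le_of_forall_pos_le_add fun ε hε => ?_
    obtain ⟨R, htR, hR⟩ := H ε hε
    have hsplit := intervalIntegral.integral_add_adjacent_intervals (hI le_rfl hp)
      (hI hp (hps.trans (hst.trans htR)))
    have hst_le : ∫ x in s..t, f x ≤ ∫ x in p..R, f x :=
      intervalIntegral.integral_mono_interval hps hst htR (Filter.Eventually.of_forall hf0)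
        (hI hp (hps.trans (hst.trans htR)))
    have hp_le : ∫ x in 0..p, f x ≤ ∫ x in 0..s, f x :=
      intervalIntegral.integral_mono_interval le_rfl hp hps (Filter.Eventually.of_forall hf0)
        (hI le_rfl hs)
    nlinarith [mul_le_mul_of_nonneg_left hst_le (sub_nonneg.2 hcD.le),
      mul_le_mul_of_nonneg_left hp_le hc]
  have hB : 0 ≤ ∫ x in 0..s, f x := intervalIntegral.integral_nonneg hs fun x _ => hf0 x
  have hD : 0 < D - c := sub_pos.2 hcD
  simp only [← integral_Ioc_eq_integral_Ioo, ← intervalIntegral.integral_of_le hs,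
    ← intervalIntegral.integral_of_le (hs.trans hst)]
  have hT : ∫ x in s..t, f x ≤ D * (∫ x in 0..s, f x) / (D - c) := by
    rw [le_div_iff₀ hD]
    nlinarith
  rw [← intervalIntegral.integral_add_adjacent_intervals (hI le_rfl hs) (hI hs hst),
    add_mul, one_mul, div_mul_eq_mul_div]
  linarith

theorem stmt_12_general (β a σ δ b K h : ℝ) (hβ : 0 < β) (ha : 0 < a) (hσ : 0 < σ) (hδ : 0 < δ)
    (hab : a + σ < b - 2 * δ) (hK : 0 < K)
    (hsmall : K * h ^ 2 < σ ^ β)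
    (lam : ℂ) (him : (lam ^ 2).im ≤ K * h ^ 2)
    (v v' v'' : ℝ → ℂ)
    (hv1 : ∀ x ∈ Ici (0:ℝ), HasDerivWithinAt v (v' x) (Ici 0) x)
    (hv1c : ContinuousOn v' (Ici 0))
    (hvL2 : IntegrableOn (fun x => ‖v x‖ ^ 2) (Ioi 0))
    (hv'L2 : IntegrableOn (fun x => ‖v' x‖ ^ 2) (Ioi 0))
    (hv2 : ∀ x ∈ Ioo (0:ℝ) a ∪ Ioi a, HasDerivAt v' (v'' x) x)
    (hbc : v 0 = 0 ∨ v' 0 = 0)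
    (hode : ∀ x ∈ Ioo (0:ℝ) a ∪ Ioi a,
      -(h:ℂ) ^ 2 * v'' x + Complex.I * (((max (x - a) 0) ^ β : ℝ) : ℂ) * v x
        - lam ^ 2 * v x = 0) :
    ∫ x in Ioo (0:ℝ) b, ‖v x‖ ^ 2
      ≤ (1 + σ ^ β / (σ ^ β - K * h ^ 2)) * ∫ x in Ioo (0:ℝ) (b - 2 * δ), ‖v x‖ ^ 2 := by
  have hvc : ContinuousOn v (Ici 0) := fun x hx => (hv1 x hx).continuousWithinAt
  refine integral_Ioo_le_of_forall_tail (f := fun x => ‖v x‖ ^ 2) (fun x => by positivity)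
    (hvc.norm.pow 2) (by linarith) hab.le (by linarith) (by positivity) hsmall fun ε hε => ?_
  obtain ⟨R, hbR, hR⟩ :=
    exists_ge_lt_of_integrableOn_Ioi ((hv'L2.add hvL2).const_mul (h ^ 2)) hε b
  have hR0 : 0 ≤ R := by linarith
  refine ⟨R, hbR, ?_⟩
  calc σ ^ β * ∫ x in (a + σ)..R, ‖v x‖ ^ 2
      ≤ ∫ x in 0..R, (max (x - a) 0) ^ β * ‖v x‖ ^ 2 :=
        rpow_mul_integral_le_integral_posPart_rpow_mul (f := fun x => ‖v x‖ ^ 2)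
          (fun x => by positivity) (hvc.norm.pow 2) (by linarith) hσ.le hβ.le (by linarith)
    _ = (lam ^ 2).im * (∫ x in 0..R, ‖v x‖ ^ 2) + h ^ 2 * (v' R * conj (v R)).im :=
        integral_posPart_rpow_mul_sq_eq hβ.le hv1 hv1c hv2 hbc hode hR0
    _ ≤ K * h ^ 2 * (∫ x in 0..R, ‖v x‖ ^ 2) + ε := by
        gcongr
        · exact intervalIntegral.integral_nonneg hR0 fun x _ => by positivity
        · exact (mul_le_mul_of_nonneg_left (Complex.im_mul_conj_le _ _) (sq_nonneg h)).trans hR.le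
    _ = ε + K * h ^ 2 * ∫ x in 0..R, ‖v x‖ ^ 2 := add_comm _ _

/-- Mass comparison: under `Im(λ²) ≤ K h²` and `K h² < σ^β`, a solution of
`-h²v'' + i(x-a)₊^β v - λ²v = 0` on `(0,∞)` with `v(0) = 0` or `v'(0) = 0` satisfies
`∫₀^b |v|² ≤ (1 + σ^β/(σ^β - K h²)) ∫₀^{b-2δ} |v|²`. -/
theorem stmt_12 (β a σ δ b K h : ℝ) (hβ : 0 < β) (ha : 0 < a) (hσ : 0 < σ) (hδ : 0 < δ)
    (hb : 0 < b) (hab : a + σ < b - 2 * δ) (hK : 0 < K) (hh : 0 < h)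
    (hsmall : K * h ^ 2 < σ ^ β)
    (lam : ℂ) (him : (lam ^ 2).im ≤ K * h ^ 2)
    (v v' v'' : ℝ → ℂ)
    (hv1 : ∀ x ∈ Ici (0:ℝ), HasDerivWithinAt v (v' x) (Ici 0) x)
    (hv1c : ContinuousOn v' (Ici 0))
    (hvL2 : IntegrableOn (fun x => ‖v x‖ ^ 2) (Ioi 0))
    (hv'L2 : IntegrableOn (fun x => ‖v' x‖ ^ 2) (Ioi 0))
    (hv2 : ∀ x ∈ Ioo (0:ℝ) a ∪ Ioi a, HasDerivAt v' (v'' x) x)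
    (hbc : v 0 = 0 ∨ v' 0 = 0)
    (hode : ∀ x ∈ Ioo (0:ℝ) a ∪ Ioi a,
      -(h:ℂ) ^ 2 * v'' x + Complex.I * (((max (x - a) 0) ^ β : ℝ) : ℂ) * v x
        - lam ^ 2 * v x = 0) :
    ∫ x in Ioo (0:ℝ) b, ‖v x‖ ^ 2
      ≤ (1 + σ ^ β / (σ ^ β - K * h ^ 2)) * ∫ x in Ioo (0:ℝ) (b - 2 * δ), ‖v x‖ ^ 2 :=
  stmt_12_general β a σ δ b K h hβ ha hσ hδ hab hK hsmall lam him v v' v'' hv1 hv1c hvL2 hv'L2 hv2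
    hbc hode
end

section
/- Let β ≥ 0, a > 0, M > 0 and K > 0. There exist h₁ > 0 and C' > 0 such that for all h ∈ (0, h₁), all l ∈ ℝ with |l| ≤ M, and all C ∈ ℂ with |C| ≤ K, setting λ = π l h / a + C·h^{(β+4)/(β+2)} and q = 1/h² + λ²/2, one has Re(q) ≥ 1/(2h²) and |Im(q)| ≤ C' / (Re(q))^{(β+3)/(β+2)}. -/
open Set

/-- Position of the quasi-eigenvalues: with `λ = πlh/a + C h^{(β+4)/(β+2)}` and
`q = 1/h² + λ²/2`, for `h` small (uniformly over `|l| ≤ M`, `|C| ≤ K`) one has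
`Re q ≥ 1/(2h²)` and `|Im q| ≤ C' / (Re q)^{(β+3)/(β+2)}`. -/
theorem stmt_13 (β a M K : ℝ) (hβ : 0 ≤ β) (ha : 0 < a) (hM : 0 < M) (hK : 0 < K) :
    ∃ h₁ > (0:ℝ), ∃ C' > (0:ℝ), ∀ h : ℝ, 0 < h → h < h₁ →
      ∀ l : ℝ, |l| ≤ M → ∀ C : ℂ, ‖C‖ ≤ K →
        ∀ lam q : ℂ,
          lam = ((Real.pi * l * h / a : ℝ) : ℂ) + C * ((h ^ ((β + 4) / (β + 2)) : ℝ) : ℂ) →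
          q = ((1 / h ^ 2 : ℝ) : ℂ) + lam ^ 2 / 2 →
          1 / (2 * h ^ 2) ≤ q.re ∧ |q.im| ≤ C' / q.re ^ ((β + 3) / (β + 2)) := by
  have ha2 : (0:ℝ) < β + 2 := by linarith
  have hπ := Real.pi_pos
  set γ := (β + 4) / (β + 2) with hγdef
  set δ := (β + 3) / (β + 2) with hδdef
  have hγ1 : 1 ≤ γ := by rw [hγdef, le_div_iff₀ ha2]; linarith
  have hδγ : δ ≤ γ := by
    rw [hδdef, hγdef, div_le_div_iff₀ ha2 ha2]; nlinarith
  have hδ0 : 0 < δ := by rw [hδdef]; positivity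
  have hδ2 : δ ≤ 2 := by rw [hδdef, div_le_iff₀ ha2]; linarith
  have h2δ : 1 + γ = 2 * δ := by
    rw [hγdef, hδdef]; field_simp; ring
  clear_value γ δ
  have hP : (0:ℝ) < Real.pi * M / a + K := by positivity
  set P := Real.pi * M / a + K with hPdef
  clear_value P
  refine ⟨min 1 (1/P), by positivity, 4 * (Real.pi * M * K / a + K^2), by positivity, ?_⟩
  intro h hh hlt l hl C hC lam q hlam hq
  have h1 : h ≤ 1 := le_of_lt (hlt.trans_le (min_le_left _ _))
  have hhP : h * P ≤ 1 := by
    have := hlt.trans_le (min_le_right _ _)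
    rw [lt_div_iff₀ hP] at this; linarith
  set t := h ^ γ with htdef
  have ht0 : 0 < t := Real.rpow_pos_of_pos hh _
  have hth : t ≤ h := by
    calc t ≤ h ^ (1:ℝ) := Real.rpow_le_rpow_of_exponent_ge hh h1 hγ1
    _ = h := Real.rpow_one h
  have hht : h * t = h ^ (2*δ) := by
    rw [htdef, ← h2δ, Real.rpow_add hh, Real.rpow_one]
  have ht2 : t^2 ≤ h ^ (2*δ) := by
    have heq2 : t^2 = h ^ (2*γ) := by
      rw [htdef, ← Real.rpow_natCast (h ^ γ) 2, ← Real.rpow_mul hh.le]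
      norm_num; ring_nf
    rw [heq2]
    exact Real.rpow_le_rpow_of_exponent_ge hh h1 (by linarith)
  clear_value t
  set r := Real.pi * l * h / a with hrdef
  have hrabs : |r| ≤ Real.pi * M / a * h := by
    rw [hrdef, abs_div, abs_of_pos ha, abs_mul, abs_mul, abs_of_pos hπ, abs_of_pos hh]
    rw [div_le_iff₀ ha]
    calc Real.pi * |l| * h ≤ Real.pi * M * h := by gcongr
      _ = Real.pi * M / a * h * a := by field_simp
  clear_value r
  have hCre : |C.re| ≤ K := (Complex.abs_re_le_norm C).trans hC
  have hCim : |C.im| ≤ K := (Complex.abs_im_le_norm C).trans hC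
  have hlre : lam.re = r + C.re * t := by rw [hlam]; simp
  have hlim : lam.im = C.im * t := by rw [hlam]; simp
  have hqre : q.re = 1 / h^2 + (lam.re^2 - lam.im^2)/2 := by
    rw [hq]
    simp [pow_two, Complex.mul_re, Complex.add_re, Complex.div_re, Complex.normSq]
  have hqim : q.im = lam.re * lam.im := by
    rw [hq]
    simp [pow_two, Complex.mul_im, Complex.add_im, Complex.div_im, Complex.normSq]
    ring
  clear hq hlam
  -- bound |lam.re| ≤ P * h, |lam.im| ≤ K * t
  have hlre_abs : |lam.re| ≤ P * h := by
    rw [hlre]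
    have h2' : |C.re * t| ≤ K * h := by
      rw [abs_mul, abs_of_pos ht0]
      exact mul_le_mul hCre hth ht0.le hK.le
    have h3' := abs_add_le r (C.re * t)
    have h4' : P * h = Real.pi * M / a * h + K * h := by rw [hPdef]; ring
    linarith only [h2', h3', h4', hrabs]
  have hlim_abs : |lam.im| ≤ K * t := by
    rw [hlim, abs_mul, abs_of_pos ht0]; gcongr
  have hPh1 : P * h ≤ 1 := by linarith [hhP]
  have hlre2 : lam.re^2 ≤ 1 := by
    calc lam.re^2 = |lam.re|^2 := (sq_abs _).symm
      _ ≤ (P * h)^2 := pow_le_pow_left₀ (abs_nonneg _) hlre_abs 2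
      _ ≤ 1 := pow_le_one₀ (mul_nonneg hP.le hh.le) hPh1
  have hlim2 : lam.im^2 ≤ 1 := by
    have hKt : K * t ≤ 1 := by
      have hKP : K ≤ P := by
        have h0 : 0 ≤ Real.pi * M / a := by positivity
        rw [hPdef]; linarith
      have : K * t ≤ P * h :=
        mul_le_mul hKP hth ht0.le (le_trans hK.le hKP)
      linarith
    calc lam.im^2 = |lam.im|^2 := (sq_abs _).symm
      _ ≤ (K * t)^2 := pow_le_pow_left₀ (abs_nonneg _) hlim_abs 2
      _ ≤ 1 := pow_le_one₀ (mul_nonneg hK.le ht0.le) hKt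
  have hh2 : (0:ℝ) < h^2 := by positivity
  have hinv : (1:ℝ) ≤ 1 / h^2 := by
    rw [le_div_iff₀ hh2, one_mul]
    exact pow_le_one₀ hh.le h1
  -- first conclusion
  have hre_lower : 1 / (2 * h^2) ≤ q.re := by
    rw [hqre]
    have e : 1 / (2 * h^2) = 1/h^2 / 2 := by ring
    rw [e]
    linarith only [sq_nonneg lam.re, hlim2, hinv]
  refine ⟨hre_lower, ?_⟩
  -- Re q upper bound
  have hre_upper : q.re ≤ 2 / h^2 := by
    rw [hqre]
    have e : (2:ℝ) / h^2 = 1/h^2 + 1/h^2 := by ring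
    rw [e]
    linarith only [sq_nonneg lam.im, hlre2, hinv]
  have hre_pos : 0 < q.re := lt_of_lt_of_le (by positivity) hre_lower
  have h2δpos : (0:ℝ) < h ^ (2*δ) := Real.rpow_pos_of_pos hh _
  set D := Real.pi * M * K / a + K^2 with hDdef
  clear_value D
  have him_bound : |q.im| ≤ D * h ^ (2*δ) := by
    rw [hqim, hlre, hlim]
    have expand : (r + C.re * t) * (C.im * t) = r * C.im * t + C.re * C.im * t^2 := by ring
    rw [expand]
    have b1 : |r * C.im * t| ≤ Real.pi * M / a * h * K * t := by
      rw [abs_mul, abs_mul, abs_of_pos ht0]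
      have : |r| * |C.im| ≤ (Real.pi * M / a * h) * K :=
        mul_le_mul hrabs hCim (abs_nonneg _) (by positivity)
      exact mul_le_mul_of_nonneg_right this ht0.le
    have b2 : |C.re * C.im * t^2| ≤ K * K * t^2 := by
      rw [abs_mul, abs_mul, abs_of_nonneg (sq_nonneg t)]
      exact mul_le_mul_of_nonneg_right (mul_le_mul hCre hCim (abs_nonneg _) hK.le) (sq_nonneg t)
    have b3 := abs_add_le (r * C.im * t) (C.re * C.im * t^2)
    have b4 : Real.pi * M / a * h * K * t = Real.pi * M * K / a * (h * t) := by ring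
    have b5 : K * K * t^2 ≤ K^2 * h ^ (2*δ) := by
      rw [pow_two K]
      exact mul_le_mul_of_nonneg_left ht2 (by positivity)
    have b6 : D * h ^ (2*δ) = Real.pi * M * K / a * h ^ (2*δ) + K^2 * h ^ (2*δ) := by
      rw [hDdef]; ring
    rw [b4, hht] at b1
    linarith only [b1, b2, b3, b5, b6]
  -- q.re ^ δ ≤ 4 / h^(2δ)
  have hpow : q.re ^ δ ≤ 4 / h ^ (2*δ) := by
    calc q.re ^ δ ≤ (2 / h^2) ^ δ := Real.rpow_le_rpow hre_pos.le hre_upper hδ0.le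
      _ = 2 ^ δ / (h^2) ^ δ := Real.div_rpow (by norm_num) (by positivity) δ
      _ ≤ 4 / h ^ (2*δ) := by
          have h2' : (2:ℝ) ^ δ ≤ 2 ^ (2:ℝ) := Real.rpow_le_rpow_of_exponent_le (by norm_num) hδ2
          have h22 : (2:ℝ) ^ (2:ℝ) = 4 := by
            rw [show (2:ℝ) = ((2:ℕ):ℝ) by norm_num, Real.rpow_natCast]; norm_num
          have heq : (h^2:ℝ) ^ δ = h ^ (2*δ) := by
            rw [← Real.rpow_natCast h 2, ← Real.rpow_mul hh.le]; norm_num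
          rw [heq]
          gcongr
          linarith
  have hreδpos : 0 < q.re ^ δ := Real.rpow_pos_of_pos hre_pos _
  rw [le_div_iff₀ hreδpos]
  have hDpos : 0 < D := by rw [hDdef]; positivity
  calc |q.im| * q.re ^ δ ≤ (D * h ^ (2*δ)) * (4 / h ^ (2*δ)) :=
        mul_le_mul him_bound hpow hreδpos.le (mul_nonneg hDpos.le h2δpos.le)
      _ = 4 * D := by
        rw [div_eq_mul_inv]
        field_simp
end

section
/- Let b > 0, let W : ℝ → ℝ be bounded measurable, let q ∈ ℂ, m ∈ ℤ, κ ≥ 0, and let ũ : [−b,b] → ℂ be twice continuously differentiable with ũ(−b) = ũ(b) = 0. Define u : [−b,b] × [−b,b] → ℂ by u(x,y) = ũ(x)·sin(2πmy/b). If ∫_{−b}^b |−ũ''(x) + i q W(x) ũ(x) + (4π²m²/b² − q²) ũ(x)|² dx ≤ κ · ∫_{−b}^b |ũ(x)|² dx, then u vanishes on the boundary of the square [−b,b]², and ∫∫_{[−b,b]²} |−Δu(x,y) + i q W(x) u(x,y) − q² u(x,y)|² dx dy ≤ κ · ∫∫_{[−b,b]²} |u(x,y)|² dx dy, where Δu =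 ∂²u/∂x² + ∂²u/∂y². -/
/-! Separation of variables: `-Δu + i q W u - q² u` is the one-dimensional quasimode expression
in `x`, multiplied by `sin(2πmy/b)`, since `sin(2πmy/b)` is an eigenfunction of `-∂²/∂y²` with
eigenvalue `4π²m²/b²`. Both sides of the estimate therefore factor by Fubini, with the same
nonnegative factor `∫ |sin(2πmy/b)|² dy`, and `sin(2πmy/b)` vanishes at `y = ±b`. -/

open MeasureTheory Set

/-- The `y`-factor `sin(2πmy/b)`, viewed as a complex number. -/
noncomputable def sinb (b : ℝ) (m : ℤ) (y : ℝ) : ℂ :=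
  ((Real.sin (2 * Real.pi * (m : ℝ) * y / b) : ℝ) : ℂ)

theorem setIntegral_prod_mul_le_of_setIntegral_le {α β : Type*} [MeasurableSpace α]
    [MeasurableSpace β] {μ : Measure α} {ν : Measure β} [SFinite μ] [SFinite ν]
    {s : Set α} {t : Set β} {f g : α → ℝ} {h : β → ℝ} {κ : ℝ}
    (hfg : ∫ x in s, f x ∂μ ≤ κ * ∫ x in s, g x ∂μ) (hh : 0 ≤ ∫ y in t, h y ∂ν) :
    ∫ p in s ×ˢ t, f p.1 * h p.2 ∂μ.prod ν ≤ κ * ∫ p in s ×ˢ t, g p.1 * h p.2 ∂μ.prod ν := by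
  rw [setIntegral_prod_mul, setIntegral_prod_mul, ← mul_assoc]
  exact mul_le_mul_of_nonneg_right hfg hh

theorem sinb_neg (b : ℝ) (m : ℤ) (y : ℝ) : sinb b m (-y) = -sinb b m y := by
  simp only [sinb, mul_neg, neg_div, Real.sin_neg, Complex.ofReal_neg]

theorem sinb_self (b : ℝ) (m : ℤ) : sinb b m b = 0 := by
  rcases eq_or_ne b 0 with rfl | hb
  · simp [sinb]
  have h : 2 * Real.pi * (m : ℝ) * b / b = ((2 * m : ℤ) : ℝ) * Real.pi := by
    field_simp; push_cast; ring
  rw [sinb, h, Real.sin_int_mul_pi, Complex.ofReal_zero]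

theorem sinb_eq_zero_of_abs_eq {b y : ℝ} (m : ℤ) (hy : |y| = b) : sinb b m y = 0 := by
  obtain rfl | rfl := (abs_eq (hy ▸ abs_nonneg y)).1 hy
  · exact sinb_self _ m
  · rw [sinb_neg, sinb_self, neg_zero]

theorem hasDerivAt_sinb_arg (b : ℝ) (m : ℤ) (y : ℝ) :
    HasDerivAt (fun t : ℝ => 2 * Real.pi * (m : ℝ) * t / b) (2 * Real.pi * (m : ℝ) / b) y := by
  simpa using ((hasDerivAt_id y).const_mul (2 * Real.pi * (m : ℝ))).div_const b

theorem hasDerivAt_sinb (b : ℝ) (m : ℤ) (y : ℝ) :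
    HasDerivAt (sinb b m)
      (((2 * Real.pi * (m : ℝ) / b * Real.cos (2 * Real.pi * (m : ℝ) * y / b) : ℝ) : ℂ)) y := by
  unfold sinb
  simpa [mul_comm] using (hasDerivAt_sinb_arg b m y).sin.ofReal_comp

theorem hasDerivAt_deriv_sinb (b : ℝ) (m : ℤ) (y : ℝ) :
    HasDerivAt
      (fun t => ((2 * Real.pi * (m : ℝ) / b * Real.cos (2 * Real.pi * (m : ℝ) * t / b) : ℝ) : ℂ))
      (-(((4 * Real.pi ^ 2 * (m : ℝ) ^ 2 / b ^ 2 : ℝ) : ℂ)) * sinb b m y) y := by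
  convert (((hasDerivAt_sinb_arg b m y).cos).const_mul (2 * Real.pi * (m : ℝ) / b)).ofReal_comp
    using 1
  simp only [sinb]
  push_cast
  ring

theorem separated_residual_eq (u u'' s μ w q : ℂ) :
    -(u'' * s + -μ * (u * s)) + Complex.I * q * w * (u * s) - q ^ 2 * (u * s)
      = (-u'' + Complex.I * q * w * u + (μ - q ^ 2) * u) * s := by
  ring

theorem stmt_16_general (b : ℝ) (W : ℝ → ℝ)
    (q : ℂ) (m : ℤ) (κ : ℝ)
    (ut ut' ut'' : ℝ → ℂ)
    (h1 : ∀ x ∈ Icc (-b) b, HasDerivWithinAt ut (ut' x) (Icc (-b) b) x)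
    (h2 : ∀ x ∈ Icc (-b) b, HasDerivWithinAt ut' (ut'' x) (Icc (-b) b) x)
    (hbc1 : ut (-b) = 0) (hbc2 : ut b = 0)
    (hineq : ∫ x in Icc (-b) b,
        ‖-ut'' x + Complex.I * q * ((W x : ℝ) : ℂ) * ut x
          + (((4 * Real.pi ^ 2 * (m : ℝ) ^ 2 / b ^ 2 : ℝ) : ℂ) - q ^ 2) * ut x‖ ^ 2
      ≤ κ * ∫ x in Icc (-b) b, ‖ut x‖ ^ 2) :
    -- `u` vanishes on the boundary of the square
    (∀ p : ℝ × ℝ, p ∈ Icc (-b) b ×ˢ Icc (-b) b → (|p.1| = b ∨ |p.2| = b) →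
      ut p.1 * sinb b m p.2 = 0) ∧
    -- identification of the second partial derivatives of `u`
    (∀ x ∈ Icc (-b) b, ∀ y : ℝ,
      HasDerivWithinAt (fun s => ut s * sinb b m y) (ut' x * sinb b m y) (Icc (-b) b) x ∧
      HasDerivWithinAt (fun s => ut' s * sinb b m y) (ut'' x * sinb b m y) (Icc (-b) b) x ∧
      HasDerivAt (fun t => ut x * sinb b m t)
        (ut x * ((2 * Real.pi * (m : ℝ) / b * Real.cos (2 * Real.pi * (m : ℝ) * y / b) : ℝ) : ℂ)) y ∧
      HasDerivAt
        (fun t => ut x * ((2 * Real.pi * (m : ℝ) / b * Real.cos (2 * Real.pi * (m : ℝ) * t / b) : ℝ) : ℂ))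
        (-(((4 * Real.pi ^ 2 * (m : ℝ) ^ 2 / b ^ 2 : ℝ) : ℂ)) * (ut x * sinb b m y)) y) ∧
    -- the two-dimensional quasimode estimate
    ∫ p in Icc (-b) b ×ˢ Icc (-b) b,
        ‖-(ut'' p.1 * sinb b m p.2
              + (-(((4 * Real.pi ^ 2 * (m : ℝ) ^ 2 / b ^ 2 : ℝ) : ℂ)) * (ut p.1 * sinb b m p.2)))
          + Complex.I * q * ((W p.1 : ℝ) : ℂ) * (ut p.1 * sinb b m p.2)
          - q ^ 2 * (ut p.1 * sinb b m p.2)‖ ^ 2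
      ≤ κ * ∫ p in Icc (-b) b ×ˢ Icc (-b) b, ‖ut p.1 * sinb b m p.2‖ ^ 2 := by
  refine ⟨?_, fun x hx y => ?_, ?_⟩
  · rintro ⟨x, y⟩ - (hx | hy)
    · obtain rfl | rfl := (abs_eq (hx ▸ abs_nonneg x)).1 hx
      · rw [hbc2, zero_mul]
      · rw [hbc1, zero_mul]
    · rw [sinb_eq_zero_of_abs_eq m hy, mul_zero]
  · exact ⟨(h1 x hx).mul_const _, (h2 x hx).mul_const _, (hasDerivAt_sinb b m y).const_mul _,
      ((hasDerivAt_deriv_sinb b m y).const_mul (ut x)).congr_deriv (by ring)⟩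
  · simp only [separated_residual_eq, norm_mul, mul_pow, Measure.volume_eq_prod]
    exact setIntegral_prod_mul_le_of_setIntegral_le (h := fun y => ‖sinb b m y‖ ^ 2) hineq
      (integral_nonneg fun y => by positivity)

/-- From one-dimensional quasimodes to two-dimensional quasimodes: if `ũ` satisfies the
one-dimensional quasimode estimate with Dirichlet conditions at `±b`, then
`u(x,y) = ũ(x) sin(2πmy/b)` vanishes on the boundary of the square `[-b,b]²`, its
Laplacian is `ũ''(x) sin(2πmy/b) - (4π²m²/b²) ũ(x) sin(2πmy/b)` (identified via iterated
partial derivatives), and `u` satisfies the corresponding two-dimensional estimate. -/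
theorem stmt_16 (b : ℝ) (hb : 0 < b) (W : ℝ → ℝ) (hWmeas : Measurable W)
    (hWbdd : ∃ M : ℝ, ∀ x : ℝ, |W x| ≤ M)
    (q : ℂ) (m : ℤ) (κ : ℝ) (hκ : 0 ≤ κ)
    (ut ut' ut'' : ℝ → ℂ)
    (h1 : ∀ x ∈ Icc (-b) b, HasDerivWithinAt ut (ut' x) (Icc (-b) b) x)
    (h2 : ∀ x ∈ Icc (-b) b, HasDerivWithinAt ut' (ut'' x) (Icc (-b) b) x)
    (hcont : ContinuousOn ut'' (Icc (-b) b))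
    (hbc1 : ut (-b) = 0) (hbc2 : ut b = 0)
    (hineq : ∫ x in Icc (-b) b,
        ‖-ut'' x + Complex.I * q * ((W x : ℝ) : ℂ) * ut x
          + (((4 * Real.pi ^ 2 * (m : ℝ) ^ 2 / b ^ 2 : ℝ) : ℂ) - q ^ 2) * ut x‖ ^ 2
      ≤ κ * ∫ x in Icc (-b) b, ‖ut x‖ ^ 2) :
    -- `u` vanishes on the boundary of the square
    (∀ p : ℝ × ℝ, p ∈ Icc (-b) b ×ˢ Icc (-b) b → (|p.1| = b ∨ |p.2| = b) →
      ut p.1 * sinb b m p.2 = 0) ∧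
    -- identification of the second partial derivatives of `u`
    (∀ x ∈ Icc (-b) b, ∀ y : ℝ,
      HasDerivWithinAt (fun s => ut s * sinb b m y) (ut' x * sinb b m y) (Icc (-b) b) x ∧
      HasDerivWithinAt (fun s => ut' s * sinb b m y) (ut'' x * sinb b m y) (Icc (-b) b) x ∧
      HasDerivAt (fun t => ut x * sinb b m t)
        (ut x * ((2 * Real.pi * (m : ℝ) / b * Real.cos (2 * Real.pi * (m : ℝ) * y / b) : ℝ) : ℂ)) y ∧
      HasDerivAt
        (fun t => ut x * ((2 * Real.pi * (m : ℝ) / b * Real.cos (2 * Real.pi * (m : ℝ) * t / b) : ℝ) : ℂ))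
        (-(((4 * Real.pi ^ 2 * (m : ℝ) ^ 2 / b ^ 2 : ℝ) : ℂ)) * (ut x * sinb b m y)) y) ∧
    -- the two-dimensional quasimode estimate
    ∫ p in Icc (-b) b ×ˢ Icc (-b) b,
        ‖-(ut'' p.1 * sinb b m p.2
              + (-(((4 * Real.pi ^ 2 * (m : ℝ) ^ 2 / b ^ 2 : ℝ) : ℂ)) * (ut p.1 * sinb b m p.2)))
          + Complex.I * q * ((W p.1 : ℝ) : ℂ) * (ut p.1 * sinb b m p.2)
          - q ^ 2 * (ut p.1 * sinb b m p.2)‖ ^ 2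
      ≤ κ * ∫ p in Icc (-b) b ×ˢ Icc (-b) b, ‖ut p.1 * sinb b m p.2‖ ^ 2 :=
  stmt_16_general b W q m κ ut ut' ut'' h1 h2 hbc1 hbc2 hineq
end

section
/- Let b > 0 and let W : [−b,b] × [−b,b] → ℝ be bounded measurable with W ≥ 0. For every real q and every twice continuously differentiable u : [−b,b]² → ℂ vanishing on the boundary of the square, setting f := −Δu + i q W u − q² u (with Δu = ∂²u/∂x² + ∂²u/∂y²), one has |q| · ∫∫_{[−b,b]²} W |u|² dx dy ≤ ‖f‖_{L²([−b,b]²)} · ‖u‖_{L²([−b,b]²)}. Consequently, for every ε > 0 and every measurable set E ⊆ [−b,b]² on which W ≥ ε, one has ε·|q|·∫∫_E |u|² dx dy ≤ ‖f‖_{L²([−b,b]²)}·‖u‖_{L²([−b,b]²)}. -/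
/-!
Pair the equation with `conj u` over the square. Integrating by parts in each variable (the
boundary terms vanish with `u`) turns `∫ -Δu · conj u` into `∫ (|∂ₓu|² + |∂ᵧu|²)`, which is real,
as is `∫ q² |u|²`; so the imaginary part of `∫ f · conj u` is exactly `q ∫ W |u|²`, and
Cauchy–Schwarz bounds it by `‖f‖₂ ‖u‖₂`. On a set where `W ≥ ε`, `ε ∫_E |u|² ≤ ∫ W |u|²`.
-/

open MeasureTheory Set ComplexConjugate

theorem ContinuousOn.memLp_restrict {X E : Type*} [TopologicalSpace X] [T2Space X]
    [MeasurableSpace X] [OpensMeasurableSpace X] {μ : Measure X} [IsFiniteMeasureOnCompacts μ]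
    [NormedAddCommGroup E] [SecondCountableTopologyEither X E] {f : X → E} {s : Set X}
    (hf : ContinuousOn f s) (hs : IsCompact s) (p : ENNReal) : MemLp f p (μ.restrict s) := by
  have : IsFiniteMeasure (μ.restrict s) := ⟨by simpa using hs.measure_lt_top⟩
  obtain ⟨C, hC⟩ := hs.exists_bound_of_continuousOn hf
  exact .of_bound (hf.aestronglyMeasurable hs.measurableSet) C
    ((ae_restrict_iff' hs.measurableSet).2 (ae_of_all _ hC))

theorem norm_integral_mul_conj_le_sqrt_mul_sqrt {α : Type*} [MeasurableSpace α]
    {μ : Measure α} {f g : α → ℂ} (hf : MemLp f 2 μ) (hg : MemLp g 2 μ) :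
    ‖∫ x, f x * conj (g x) ∂μ‖ ≤ √(∫ x, ‖f x‖ ^ 2 ∂μ) * √(∫ x, ‖g x‖ ^ 2 ∂μ) := by
  have := integral_mul_le_Lp_mul_Lq_of_nonneg Real.HolderConjugate.two_two
    (ae_of_all μ fun x => norm_nonneg (f x)) (ae_of_all μ fun x => norm_nonneg (g x))
    (by simpa using hf.norm) (by simpa using hg.norm)
  refine (norm_integral_le_integral_norm _).trans ?_
  simpa [Real.sqrt_eq_rpow] using this

theorem mul_setIntegral_le_setIntegral_mul {α : Type*} [MeasurableSpace α] {μ : Measure α}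
    {E Q : Set α} {W g : α → ℝ} {ε : ℝ} (hE : MeasurableSet E) (hEQ : E ⊆ Q)
    (hW : ∀ x, 0 ≤ W x) (hg : ∀ x, 0 ≤ g x) (hεW : ∀ x ∈ E, ε ≤ W x)
    (hgE : IntegrableOn g E μ) (hWg : IntegrableOn (fun x => W x * g x) Q μ) :
    ε * ∫ x in E, g x ∂μ ≤ ∫ x in Q, W x * g x ∂μ :=
  calc ε * ∫ x in E, g x ∂μ = ∫ x in E, ε * g x ∂μ := (integral_const_mul ε _).symm
    _ ≤ ∫ x in E, W x * g x ∂μ :=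
      setIntegral_mono_on (hgE.const_mul ε) (hWg.mono_set hEQ) hE
        fun x hx => mul_le_mul_of_nonneg_right (hεW x hx) (hg x)
    _ ≤ ∫ x in Q, W x * g x ∂μ :=
      setIntegral_mono_set hWg (ae_of_all _ fun x => mul_nonneg (hW x) (hg x)) hEQ.eventuallyLE

theorem integral_Icc_deriv_mul_conj_add_eq_zero {a b : ℝ} (hab : a ≤ b) {v v' w w' : ℝ → ℂ}
    (hv : ∀ x ∈ Icc a b, HasDerivWithinAt v (v' x) (Icc a b) x)
    (hw : ∀ x ∈ Icc a b, HasDerivWithinAt w (w' x) (Icc a b) x)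
    (hv' : ContinuousOn v' (Icc a b)) (hw' : ContinuousOn w' (Icc a b))
    (ha : w a = 0) (hb : w b = 0) :
    ∫ x in Icc a b, v' x * conj (w x) + v x * conj (w' x) = 0 := by
  rw [integral_Icc_eq_integral_Ioc, ← intervalIntegral.integral_of_le hab]
  rw [← uIcc_of_le hab] at hv hw hv' hw'
  have := intervalIntegral.integral_deriv_mul_eq_sub_of_hasDerivWithinAt hv
    (fun x hx => (hw x hx).star) (hv'.intervalIntegrable) (hw'.star.intervalIntegrable)
  simpa [ha, hb] using this

theorem integral_rect_dyy_mul_conj_add_eq_zero {a b c d : ℝ} (hcd : c ≤ d)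
    {u uy uyy : ℝ × ℝ → ℂ}
    (huy : ∀ p ∈ Icc a b ×ˢ Icc c d, HasDerivWithinAt (fun t => u (p.1, t)) (uy p) (Icc c d) p.2)
    (huyy : ∀ p ∈ Icc a b ×ˢ Icc c d,
      HasDerivWithinAt (fun t => uy (p.1, t)) (uyy p) (Icc c d) p.2)
    (hu : ContinuousOn u (Icc a b ×ˢ Icc c d)) (huy' : ContinuousOn uy (Icc a b ×ˢ Icc c d))
    (huyy' : ContinuousOn uyy (Icc a b ×ˢ Icc c d))
    (hc : ∀ x ∈ Icc a b, u (x, c) = 0) (hd : ∀ x ∈ Icc a b, u (x, d) = 0) :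
    ∫ p in Icc a b ×ˢ Icc c d, uyy p * conj (u p) + uy p * conj (uy p) = 0 := by
  have hint : IntegrableOn (fun p => uyy p * conj (u p) + uy p * conj (uy p))
      (Icc a b ×ˢ Icc c d) :=
    ((huyy'.mul hu.star).add (huy'.mul huy'.star)).integrableOn_compact
      (isCompact_Icc.prod isCompact_Icc)
  rw [Measure.volume_eq_prod] at hint ⊢
  rw [setIntegral_prod _ hint]
  refine setIntegral_eq_zero_of_forall_eq_zero fun x hx => ?_
  have hslice : MapsTo (fun t => (x, t)) (Icc c d) (Icc a b ×ˢ Icc c d) := fun t ht => ⟨hx, ht⟩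
  have hcont : ContinuousOn (fun t => (x, t)) (Icc c d) :=
    (continuous_const.prodMk continuous_id).continuousOn
  exact integral_Icc_deriv_mul_conj_add_eq_zero hcd (fun t ht => huyy _ (hslice ht))
    (fun t ht => huy _ (hslice ht)) (huyy'.comp hcont hslice) (huy'.comp hcont hslice)
    (hc x hx) (hd x hx)

theorem integral_rect_dxx_mul_conj_add_eq_zero {a b c d : ℝ} (hab : a ≤ b)
    {u ux uxx : ℝ × ℝ → ℂ}
    (hux : ∀ p ∈ Icc a b ×ˢ Icc c d, HasDerivWithinAt (fun s => u (s, p.2)) (ux p) (Icc a b) p.1)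
    (huxx : ∀ p ∈ Icc a b ×ˢ Icc c d,
      HasDerivWithinAt (fun s => ux (s, p.2)) (uxx p) (Icc a b) p.1)
    (hu : ContinuousOn u (Icc a b ×ˢ Icc c d)) (hux' : ContinuousOn ux (Icc a b ×ˢ Icc c d))
    (huxx' : ContinuousOn uxx (Icc a b ×ˢ Icc c d))
    (ha : ∀ y ∈ Icc c d, u (a, y) = 0) (hb : ∀ y ∈ Icc c d, u (b, y) = 0) :
    ∫ p in Icc a b ×ˢ Icc c d, uxx p * conj (u p) + ux p * conj (ux p) = 0 := by
  have hswap : MapsTo Prod.swap (Icc c d ×ˢ Icc a b) (Icc a b ×ˢ Icc c d) :=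
    fun p hp => ⟨hp.2, hp.1⟩
  have := integral_rect_dyy_mul_conj_add_eq_zero hab (u := fun p => u p.swap)
    (uy := fun p => ux p.swap) (uyy := fun p => uxx p.swap)
    (fun p hp => hux _ (hswap hp)) (fun p hp => huxx _ (hswap hp))
    (hu.comp continuous_swap.continuousOn hswap) (hux'.comp continuous_swap.continuousOn hswap)
    (huxx'.comp continuous_swap.continuousOn hswap) ha hb
  rwa [Measure.volume_eq_prod,
    setIntegral_prod_swap _ _ fun p => uxx p * conj (u p) + ux p * conj (ux p)] at this

theorem im_integral_dampedWave_mul_conj {a b c d : ℝ} (hab : a ≤ b) (hcd : c ≤ d)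
    (W : ℝ × ℝ → ℝ) (q : ℝ) {u ux uy uxx uyy : ℝ × ℝ → ℂ}
    (hux : ∀ p ∈ Icc a b ×ˢ Icc c d, HasDerivWithinAt (fun s => u (s, p.2)) (ux p) (Icc a b) p.1)
    (huxx : ∀ p ∈ Icc a b ×ˢ Icc c d,
      HasDerivWithinAt (fun s => ux (s, p.2)) (uxx p) (Icc a b) p.1)
    (huy : ∀ p ∈ Icc a b ×ˢ Icc c d, HasDerivWithinAt (fun t => u (p.1, t)) (uy p) (Icc c d) p.2)
    (huyy : ∀ p ∈ Icc a b ×ˢ Icc c d,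
      HasDerivWithinAt (fun t => uy (p.1, t)) (uyy p) (Icc c d) p.2)
    (hu : ContinuousOn u (Icc a b ×ˢ Icc c d)) (hux' : ContinuousOn ux (Icc a b ×ˢ Icc c d))
    (huy' : ContinuousOn uy (Icc a b ×ˢ Icc c d)) (huxx' : ContinuousOn uxx (Icc a b ×ˢ Icc c d))
    (huyy' : ContinuousOn uyy (Icc a b ×ˢ Icc c d))
    (hbdry : ∀ p ∈ Icc a b ×ˢ Icc c d, (p.1 = a ∨ p.1 = b ∨ p.2 = c ∨ p.2 = d) → u p = 0)
    (hWu : IntegrableOn (fun p => W p * ‖u p‖ ^ 2) (Icc a b ×ˢ Icc c d)) :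
    (∫ p in Icc a b ×ˢ Icc c d,
        (-(uxx p + uyy p) + Complex.I * q * W p * u p - q ^ 2 * u p) * conj (u p)).im
      = q * ∫ p in Icc a b ×ˢ Icc c d, W p * ‖u p‖ ^ 2 := by
  have hR : IsCompact (Icc a b ×ˢ Icc c d) := isCompact_Icc.prod isCompact_Icc
  have hx := integral_rect_dxx_mul_conj_add_eq_zero hab hux huxx hu hux' huxx'
    (fun y hy => hbdry _ ⟨left_mem_Icc.2 hab, hy⟩ (.inl rfl))
    (fun y hy => hbdry _ ⟨right_mem_Icc.2 hab, hy⟩ (.inr (.inl rfl)))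
  have hy := integral_rect_dyy_mul_conj_add_eq_zero hcd huy huyy hu huy' huyy'
    (fun x hx => hbdry _ ⟨hx, left_mem_Icc.2 hcd⟩ (.inr (.inr (.inl rfl))))
    (fun x hx => hbdry _ ⟨hx, right_mem_Icc.2 hcd⟩ (.inr (.inr (.inr rfl))))
  -- `v * conj v = ‖v‖²` makes every term real except the damping one
  have hsplit : ∀ p, (-(uxx p + uyy p) + Complex.I * q * W p * u p - q ^ 2 * u p) * conj (u p)
      = ((‖ux p‖ ^ 2 + ‖uy p‖ ^ 2 - q ^ 2 * ‖u p‖ ^ 2 : ℝ) : ℂ)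
        - (uxx p * conj (u p) + ux p * conj (ux p)) - (uyy p * conj (u p) + uy p * conj (uy p))
        + Complex.I * q * ((W p * ‖u p‖ ^ 2 : ℝ) : ℂ) := by
    intro p
    push_cast
    linear_combination (Complex.I * q * W p - q ^ 2) * Complex.mul_conj' (u p)
      + Complex.mul_conj' (ux p) + Complex.mul_conj' (uy p)
  have hreal : IntegrableOn (fun p => ‖ux p‖ ^ 2 + ‖uy p‖ ^ 2 - q ^ 2 * ‖u p‖ ^ 2)
      (Icc a b ×ˢ Icc c d) :=
    (((hux'.norm.pow 2).add (huy'.norm.pow 2)).sub ((hu.norm.pow 2).const_smul (q ^ 2)))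
      |>.integrableOn_compact hR
  have hdx : IntegrableOn (fun p => uxx p * conj (u p) + ux p * conj (ux p))
      (Icc a b ×ˢ Icc c d) :=
    ((huxx'.mul hu.star).add (hux'.mul hux'.star)).integrableOn_compact hR
  have hdy : IntegrableOn (fun p => uyy p * conj (u p) + uy p * conj (uy p))
      (Icc a b ×ˢ Icc c d) :=
    ((huyy'.mul hu.star).add (huy'.mul huy'.star)).integrableOn_compact hR
  rw [integral_congr_ae (ae_of_all _ hsplit), integral_add, integral_sub, integral_sub, hx, hy,
    integral_const_mul, integral_complex_ofReal, integral_complex_ofReal]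
  · simp
  exacts [hreal.ofReal, hdx, hreal.ofReal.sub hdx, hdy, (hreal.ofReal.sub hdx).sub hdy,
    hWu.ofReal.const_mul _]

/-- Pairing estimate: for the stationary damped wave operator on the square `[-b,b]²` with
nonnegative bounded measurable damping `W` and `u` twice continuously differentiable
vanishing on the boundary, setting `f = -Δu + iqWu - q²u`,
`|q| ∫∫ W|u|² ≤ ‖f‖_{L²} ‖u‖_{L²}`; consequently on any measurable set `E` where `W ≥ ε`,
`ε |q| ∫∫_E |u|² ≤ ‖f‖_{L²} ‖u‖_{L²}`. -/
theorem stmt_19 (b : ℝ) (hb : 0 < b)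
    (W : ℝ × ℝ → ℝ) (hWmeas : Measurable W) (hWbdd : ∃ M : ℝ, ∀ p : ℝ × ℝ, |W p| ≤ M)
    (hWpos : ∀ p : ℝ × ℝ, 0 ≤ W p)
    (q : ℝ) (u ux uy uxx uyy : ℝ × ℝ → ℂ)
    (hux : ∀ p ∈ Icc (-b) b ×ˢ Icc (-b) b,
      HasDerivWithinAt (fun s => u (s, p.2)) (ux p) (Icc (-b) b) p.1)
    (huxx : ∀ p ∈ Icc (-b) b ×ˢ Icc (-b) b,
      HasDerivWithinAt (fun s => ux (s, p.2)) (uxx p) (Icc (-b) b) p.1)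
    (huy : ∀ p ∈ Icc (-b) b ×ˢ Icc (-b) b,
      HasDerivWithinAt (fun t => u (p.1, t)) (uy p) (Icc (-b) b) p.2)
    (huyy : ∀ p ∈ Icc (-b) b ×ˢ Icc (-b) b,
      HasDerivWithinAt (fun t => uy (p.1, t)) (uyy p) (Icc (-b) b) p.2)
    (hu : ContinuousOn u (Icc (-b) b ×ˢ Icc (-b) b))
    (hux' : ContinuousOn ux (Icc (-b) b ×ˢ Icc (-b) b))
    (huy' : ContinuousOn uy (Icc (-b) b ×ˢ Icc (-b) b))
    (huxx' : ContinuousOn uxx (Icc (-b) b ×ˢ Icc (-b) b))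
    (huyy' : ContinuousOn uyy (Icc (-b) b ×ˢ Icc (-b) b))
    (hbdry : ∀ p ∈ Icc (-b) b ×ˢ Icc (-b) b, (|p.1| = b ∨ |p.2| = b) → u p = 0) :
    |q| * ∫ p in Icc (-b) b ×ˢ Icc (-b) b, W p * ‖u p‖ ^ 2
      ≤ Real.sqrt (∫ p in Icc (-b) b ×ˢ Icc (-b) b,
            ‖-(uxx p + uyy p) + Complex.I * (q : ℂ) * ((W p : ℝ) : ℂ) * u p
              - (q : ℂ) ^ 2 * u p‖ ^ 2)
          * Real.sqrt (∫ p in Icc (-b) b ×ˢ Icc (-b) b, ‖u p‖ ^ 2) ∧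
    ∀ ε : ℝ, 0 < ε → ∀ E : Set (ℝ × ℝ), MeasurableSet E → E ⊆ Icc (-b) b ×ˢ Icc (-b) b →
      (∀ p ∈ E, ε ≤ W p) →
      ε * |q| * ∫ p in E, ‖u p‖ ^ 2
        ≤ Real.sqrt (∫ p in Icc (-b) b ×ˢ Icc (-b) b,
              ‖-(uxx p + uyy p) + Complex.I * (q : ℂ) * ((W p : ℝ) : ℂ) * u p
                - (q : ℂ) ^ 2 * u p‖ ^ 2)
            * Real.sqrt (∫ p in Icc (-b) b ×ˢ Icc (-b) b, ‖u p‖ ^ 2) := by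
  obtain ⟨M, hM⟩ := hWbdd
  have hQ : IsCompact (Icc (-b) b ×ˢ Icc (-b) b) := isCompact_Icc.prod isCompact_Icc
  have hu2 : MemLp u 2 (volume.restrict (Icc (-b) b ×ˢ Icc (-b) b)) := hu.memLp_restrict hQ 2
  have hu2int : IntegrableOn (fun p => ‖u p‖ ^ 2) (Icc (-b) b ×ˢ Icc (-b) b) :=
    (hu.norm.pow 2).integrableOn_compact hQ
  have hWu : IntegrableOn (fun p => W p * ‖u p‖ ^ 2) (Icc (-b) b ×ˢ Icc (-b) b) :=
    hu2int.bdd_mul hWmeas.aestronglyMeasurable (ae_of_all _ fun p => by simpa using hM p)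
  have hIqW : MemLp (fun p => Complex.I * (q : ℂ) * ((W p : ℝ) : ℂ)) ⊤
      (volume.restrict (Icc (-b) b ×ˢ Icc (-b) b)) :=
    memLp_top_of_bound (by fun_prop) (|q| * M) (ae_of_all _ fun p => by
      simpa using mul_le_mul_of_nonneg_left (hM p) (abs_nonneg q))
  have hf := ((((huxx'.add huyy').neg).memLp_restrict hQ 2).add (hu2.mul' hIqW)).sub
    (hu2.const_mul ((q : ℂ) ^ 2))
  have hpair := im_integral_dampedWave_mul_conj (by linarith) (by linarith) W q hux huxx huy huyy
    hu hux' huy' huxx' huyy'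
    (fun p hp h => hbdry p hp (by rcases h with h | h | h | h <;> simp [h, hb.le])) hWu
  have hestimate : |q| * ∫ p in Icc (-b) b ×ˢ Icc (-b) b, W p * ‖u p‖ ^ 2 ≤ _ :=
    calc |q| * ∫ p in Icc (-b) b ×ˢ Icc (-b) b, W p * ‖u p‖ ^ 2
        ≤ |q * ∫ p in Icc (-b) b ×ˢ Icc (-b) b, W p * ‖u p‖ ^ 2| := by
          rw [abs_mul]; gcongr; exact le_abs_self _
      _ ≤ _ := hpair ▸ Complex.abs_im_le_norm _
      _ ≤ _ := norm_integral_mul_conj_le_sqrt_mul_sqrt hf hu2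
  refine ⟨hestimate, fun ε _ E hE hEQ hEW => ?_⟩
  calc ε * |q| * ∫ p in E, ‖u p‖ ^ 2 = |q| * (ε * ∫ p in E, ‖u p‖ ^ 2) := by ring
    _ ≤ |q| * ∫ p in Icc (-b) b ×ˢ Icc (-b) b, W p * ‖u p‖ ^ 2 := by
      gcongr
      exact mul_setIntegral_le_setIntegral_mul hE hEQ hWpos (fun p => by positivity) hEW
        (hu2int.mono_set hEQ) hWu
    _ ≤ _ := hestimate
end
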